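/- arXiv:2511.13893 — 6 statements merged into one kernel-verified Lean document; each statement's English description precedes it below -/
import Mathlib

section
/- The Gaussian mechanism satisfies 1/(2σ²)-zCDP: let f map datasets to ℝ^k with ℓ2-sensitivity Δ_f, i.e., ‖f(D) − f(D')‖₂ ≤ Δ_f for all neighboring datasets D ≃ D', and let σ > 0. Define A(D) to be the law of f(D) + σ·Δ_f·Z, where Z is a standard k-dimensional Gaussian vector (k independent N(0,1) coordinates). Then for all neighboring D ≃ D' and all α > 1, D_α(A(D) ‖ A(D')) ≤ α/(2σ²). -/
open MeasureTheory ProbabilityTheory Finset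
open scoped ENNReal NNReal Real

/-- The Rényi divergence of order `α` between measures `P` and `Q`:
`D_α(P ‖ Q) = (1/(α−1)) · log ∫ (dP/dQ)^α dQ`. -/
noncomputable def renyiDiv {Ω : Type*} [MeasurableSpace Ω] (α : ℝ)
    (P Q : Measure Ω) : ℝ :=
  (α - 1)⁻¹ * Real.log (∫ x, ((P.rnDeriv Q) x).toReal ^ α ∂Q)

lemma aux_lintegral_pi {n : ℕ} (μ : Fin n → Measure ℝ) [∀ i, SigmaFinite (μ i)]
    (f : Fin n → ℝ → ℝ≥0∞) (hf : ∀ i, Measurable (f i)) :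
    ∫⁻ x, ∏ i, f i (x i) ∂Measure.pi μ = ∏ i, ∫⁻ t, f i t ∂μ i := by
  induction n with
  | zero => simp
  | succ n ih =>
    have hmp := measurePreserving_piFinSuccAbove μ 0
    have hmeas : Measurable fun p : ℝ × (Fin n → ℝ) =>
        f 0 p.1 * ∏ j : Fin n, f ((0 : Fin (n+1)).succAbove j) (p.2 j) := by
      refine ((hf 0).comp measurable_fst).mul ?_
      exact Finset.measurable_prod _ fun j _ =>
        (hf _).comp ((measurable_pi_apply j).comp measurable_snd)
    calc ∫⁻ x, ∏ i, f i (x i) ∂Measure.pi μ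
        = ∫⁻ x, f 0 (x 0) * ∏ j : Fin n, f ((0 : Fin (n+1)).succAbove j)
            (x ((0 : Fin (n+1)).succAbove j)) ∂Measure.pi μ := by
          congr 1; ext x; exact Fin.prod_univ_succAbove (fun i => f i (x i)) 0
      _ = ∫⁻ p : ℝ × (Fin n → ℝ), f 0 p.1 * ∏ j : Fin n, f ((0 : Fin (n+1)).succAbove j) (p.2 j)
            ∂((μ 0).prod (Measure.pi fun j => μ ((0 : Fin (n+1)).succAbove j))) := by
          rw [← hmp.lintegral_comp hmeas]; rfl
      _ = (∫⁻ t, f 0 t ∂μ 0) * ∏ j : Fin n, ∫⁻ t, f ((0 : Fin (n+1)).succAbove j) t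
            ∂μ ((0 : Fin (n+1)).succAbove j) := by
          have h2 := lintegral_prod_mul (μ := μ 0)
            (ν := Measure.pi fun j => μ ((0 : Fin (n+1)).succAbove j)) (f := f 0)
            (g := fun y : Fin n → ℝ => ∏ j : Fin n, f ((0 : Fin (n+1)).succAbove j) (y j))
            ((hf 0).aemeasurable)
            (Finset.measurable_prod _ fun j _ => (hf _).comp (measurable_pi_apply j)).aemeasurable
          rw [h2, ih _ _ fun j => hf _]
      _ = ∏ i, ∫⁻ t, f i t ∂μ i := (Fin.prod_univ_succAbove (fun i => ∫⁻ t, f i t ∂μ i) 0).symm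

lemma aux_pi_withDensity {n : ℕ} (g : Fin n → ℝ → ℝ≥0∞) (hg : ∀ i, Measurable (g i))
    [∀ i, SigmaFinite ((volume : Measure ℝ).withDensity (g i))] :
    Measure.pi (fun i => (volume : Measure ℝ).withDensity (g i))
      = (Measure.pi fun _ : Fin n => (volume : Measure ℝ)).withDensity
          (fun x => ∏ i, g i (x i)) := by
  refine (Measure.pi_eq (μ := fun i => (volume : Measure ℝ).withDensity (g i))
    (μ' := (Measure.pi fun _ : Fin n => (volume : Measure ℝ)).withDensity
      (fun x => ∏ i, g i (x i))) fun s hs => ?_).symm.symm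
  rw [withDensity_apply _ (MeasurableSet.univ_pi hs)]
  have h1 : ∀ x : Fin n → ℝ, Set.indicator (Set.univ.pi s) (fun x => ∏ i, g i (x i)) x
      = ∏ i, Set.indicator (s i) (g i) (x i) := by
    intro x
    by_cases hx : x ∈ Set.univ.pi s
    · rw [Set.indicator_of_mem hx]
      exact Finset.prod_congr rfl fun i _ =>
        (Set.indicator_of_mem (hx i (Set.mem_univ i)) _).symm
    · rw [Set.indicator_of_notMem hx]
      simp only [Set.mem_pi, Set.mem_univ, forall_true_left, not_forall] at hx
      obtain ⟨i, hi⟩ := hx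
      exact (Finset.prod_eq_zero (Finset.mem_univ i)
        (Set.indicator_of_notMem hi _)).symm
  rw [← lintegral_indicator (MeasurableSet.univ_pi hs) (fun x => ∏ i, g i (x i))]
  simp_rw [h1]
  rw [aux_lintegral_pi _ _ (fun i => (hg i).indicator (hs i))]
  exact Finset.prod_congr rfl fun i _ => by
    rw [lintegral_indicator (hs i) (g i), withDensity_apply _ (hs i)]

lemma aux_pdf_eq (μ ν : ℝ) {v : ℝ≥0} (hv : v ≠ 0) (α : ℝ) (t : ℝ) :
    (gaussianPDFReal μ v t / gaussianPDFReal ν v t) ^ α * gaussianPDFReal ν v t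
      = Real.exp (α * (α - 1) * (μ - ν) ^ 2 / (2 * v))
        * gaussianPDFReal (α * μ + (1 - α) * ν) v t := by
  have hv' : (0 : ℝ) < v := by positivity
  have hc : (0 : ℝ) < (Real.sqrt (2 * Real.pi * v))⁻¹ := by positivity
  unfold gaussianPDFReal
  rw [mul_div_mul_left _ _ hc.ne', ← Real.exp_sub,
    Real.rpow_def_of_pos (Real.exp_pos _), Real.log_exp]
  rw [show ((Real.sqrt (2 * Real.pi * ↑v))⁻¹ * Real.exp (-(t - ν) ^ 2 / (2 * ↑v)))
      = Real.exp (-(t - ν) ^ 2 / (2 * ↑v)) * (Real.sqrt (2 * Real.pi * ↑v))⁻¹ from mul_comm _ _]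
  rw [← mul_assoc, ← Real.exp_add]
  rw [show (Real.exp (α * (α - 1) * (μ - ν) ^ 2 / (2 * ↑v)) *
      ((Real.sqrt (2 * Real.pi * ↑v))⁻¹ * Real.exp (-(t - (α * μ + (1 - α) * ν)) ^ 2 / (2 * ↑v))))
      = Real.exp (α * (α - 1) * (μ - ν) ^ 2 / (2 * ↑v) +
        -(t - (α * μ + (1 - α) * ν)) ^ 2 / (2 * ↑v)) * (Real.sqrt (2 * Real.pi * ↑v))⁻¹ by
    rw [Real.exp_add]; ring]
  congr 1
  rw [Real.exp_eq_exp]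
  field_simp
  ring

lemma aux_cont (m : ℝ) (v : ℝ≥0) : Continuous (gaussianPDFReal m v) := by
  unfold gaussianPDFReal; fun_prop

lemma aux_ratio_cont (μ ν : ℝ) {v : ℝ≥0} (hv : v ≠ 0) (α : ℝ) :
    Continuous fun t => (gaussianPDFReal μ v t / gaussianPDFReal ν v t) ^ α := by
  refine Continuous.rpow_const ?_ fun t => Or.inl ?_
  · exact (aux_cont μ v).div (aux_cont ν v)
      (fun t => (gaussianPDFReal_pos ν v t hv).ne')
  · exact div_ne_zero (gaussianPDFReal_pos μ v t hv).ne' (gaussianPDFReal_pos ν v t hv).ne'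

lemma aux_onedim (μ ν : ℝ) {v : ℝ≥0} (hv : v ≠ 0) (α : ℝ) :
    ∫⁻ t, ENNReal.ofReal ((gaussianPDFReal μ v t / gaussianPDFReal ν v t) ^ α)
        ∂(gaussianReal ν v)
      = ENNReal.ofReal (Real.exp (α * (α - 1) * (μ - ν) ^ 2 / (2 * v))) := by
  rw [gaussianReal_of_var_ne_zero _ hv,
    lintegral_withDensity_eq_lintegral_mul _ (measurable_gaussianPDF _ _)
      (Measurable.ennreal_ofReal (aux_ratio_cont μ ν hv α).measurable)]
  simp only [Pi.mul_apply, gaussianPDF]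
  have h : ∀ t, ENNReal.ofReal (gaussianPDFReal ν v t)
      * ENNReal.ofReal ((gaussianPDFReal μ v t / gaussianPDFReal ν v t) ^ α)
      = ENNReal.ofReal (Real.exp (α * (α - 1) * (μ - ν) ^ 2 / (2 * v)))
        * ENNReal.ofReal (gaussianPDFReal (α * μ + (1 - α) * ν) v t) := by
    intro t
    rw [← ENNReal.ofReal_mul (gaussianPDFReal_nonneg _ _ _), mul_comm (gaussianPDFReal ν v t),
      aux_pdf_eq μ ν hv α t, ENNReal.ofReal_mul (Real.exp_pos _).le]
  simp_rw [h]
  rw [lintegral_const_mul _ (measurable_gaussianPDFReal _ _).ennreal_ofReal]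
  have h1 : ∫⁻ a, ENNReal.ofReal (gaussianPDFReal (α * μ + (1 - α) * ν) v a) = 1 :=
    lintegral_gaussianPDF_eq_one _ hv
  rw [h1, mul_one]

/-- **The Gaussian mechanism satisfies `1/(2σ²)`-zCDP.** Let `f` map datasets to `ℝ^k`
with ℓ2-sensitivity `Δ`, i.e. `‖f(D) − f(D')‖₂ ≤ Δ` for all neighboring `D ≃ D'`, and
let `σ > 0`. The mechanism `A(D)`, the law of `f(D) + σ·Δ·Z` with `Z` a standard
`k`-dimensional Gaussian (i.e. the product measure whose `i`-th coordinate is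
`N(f(D)_i, (σΔ)²)`), satisfies `D_α(A(D) ‖ A(D')) ≤ α/(2σ²)` for all neighboring
`D ≃ D'` and all `α > 1`. -/
theorem gaussianMechanism_zCDP
    {Dset : Type*} (Neighboring : Dset → Dset → Prop) (k : ℕ)
    (f : Dset → EuclideanSpace ℝ (Fin k)) (Δ σ : ℝ) (hσ : 0 < σ)
    (hΔ : ∀ D D', Neighboring D D' → ‖f D - f D'‖ ≤ Δ)
    (A : Dset → Measure (Fin k → ℝ))
    (hA : ∀ D, A D = Measure.pi fun i => gaussianReal (f D i) ((σ * Δ) ^ 2).toNNReal) :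
    ∀ D D', Neighboring D D' → ∀ α : ℝ, 1 < α →
      renyiDiv α (A D) (A D') ≤ α / (2 * σ ^ 2) := by
  intro D D' hN α hα
  have hα0 : (0:ℝ) < α := lt_trans one_pos hα
  have hα1 : (0:ℝ) < α - 1 := sub_pos.mpr hα
  have hΔ0 : 0 ≤ Δ := le_trans (norm_nonneg _) (hΔ D D' hN)
  by_cases hΔz : Δ = 0
  · -- degenerate case: the two measures coincide
    have hff : f D = f D' := by
      have h := hΔ D D' hN
      rw [hΔz] at h
      exact sub_eq_zero.mp (norm_le_zero_iff.mp h)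
    have hAA : A D = A D' := by rw [hA, hA, hff]
    haveI hprob : IsProbabilityMeasure (A D') := by rw [hA]; infer_instance
    rw [hAA]
    unfold renyiDiv
    have h1 : ∫ x, ((A D').rnDeriv (A D') x).toReal ^ α ∂(A D') = 1 := by
      have h2 : ∀ᵐ x ∂(A D'), ((A D').rnDeriv (A D') x).toReal ^ α = 1 := by
        filter_upwards [Measure.rnDeriv_self (A D')] with x hx
        rw [hx]; simp
      rw [integral_congr_ae h2]
      simp
    rw [h1, Real.log_one, mul_zero]
    positivity
  · have hΔpos : 0 < Δ := lt_of_le_of_ne hΔ0 (Ne.symm hΔz)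
    set v : ℝ≥0 := ((σ * Δ) ^ 2).toNNReal with hv_def
    have hvpos : (0:ℝ) < (σ * Δ) ^ 2 := by positivity
    have hv : v ≠ 0 := (Real.toNNReal_pos.mpr hvpos).ne'
    have hvco : (v : ℝ) = (σ * Δ) ^ 2 := Real.coe_toNNReal _ (by positivity)
    have hvco0 : (0:ℝ) < (v:ℝ) := by rw [hvco]; positivity
    haveI hprob : IsProbabilityMeasure (A D') := by rw [hA]; infer_instance
    haveI hprobD : IsProbabilityMeasure (A D) := by rw [hA]; infer_instance
    -- densities
    set F : (Fin k → ℝ) → ℝ≥0∞ := fun x => ∏ i, gaussianPDF (f D i) v (x i) with hF_def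
    set G : (Fin k → ℝ) → ℝ≥0∞ := fun x => ∏ i, gaussianPDF (f D' i) v (x i) with hG_def
    have hFmeas : Measurable F :=
      Finset.measurable_prod _ fun i _ => (measurable_gaussianPDF _ _).comp (measurable_pi_apply i)
    have hGmeas : Measurable G :=
      Finset.measurable_prod _ fun i _ => (measurable_gaussianPDF _ _).comp (measurable_pi_apply i)
    have hG0 : ∀ x, G x ≠ 0 := fun x =>
      Finset.prod_ne_zero_iff.mpr fun i _ => (gaussianPDF_pos _ hv _).ne'
    have hGtop : ∀ x, G x ≠ ∞ := fun x =>
      (ENNReal.prod_lt_top fun i _ => ENNReal.ofReal_lt_top).ne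
    haveI : ∀ m : Fin k → ℝ, ∀ i : Fin k,
        SigmaFinite ((volume : Measure ℝ).withDensity (gaussianPDF (m i) v)) := fun m i =>
      gaussianReal_of_var_ne_zero (m i) hv ▸ inferInstanceAs (SigmaFinite (gaussianReal (m i) v))
    have hP : A D = (Measure.pi fun _ : Fin k => (volume : Measure ℝ)).withDensity F := by
      rw [hA,
        show (fun i : Fin k => gaussianReal (f D i) v)
          = fun i => (volume : Measure ℝ).withDensity (gaussianPDF (f D i) v) from
          funext fun i => gaussianReal_of_var_ne_zero _ hv]
      exact aux_pi_withDensity _ (fun i => measurable_gaussianPDF _ _)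
    have hQ : A D' = (Measure.pi fun _ : Fin k => (volume : Measure ℝ)).withDensity G := by
      rw [hA,
        show (fun i : Fin k => gaussianReal (f D' i) v)
          = fun i => (volume : Measure ℝ).withDensity (gaussianPDF (f D' i) v) from
          funext fun i => gaussianReal_of_var_ne_zero _ hv]
      exact aux_pi_withDensity _ (fun i => measurable_gaussianPDF _ _)
    have hQP : (A D').withDensity (fun x => F x / G x) = A D := by
      rw [hQ, hP, show (fun x => F x / G x) = F / G from rfl, ← withDensity_mul _ hGmeas (hFmeas.div hGmeas)]
      congr 1
      funext x
      exact ENNReal.mul_div_cancel (hG0 x) (hGtop x)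
    have hrn : (A D).rnDeriv (A D') =ᵐ[A D'] fun x => F x / G x := by
      have h := Measure.rnDeriv_withDensity (A D') (hFmeas.div hGmeas)
      rwa [show F / G = fun x => F x / G x from rfl, hQP] at h
    -- rewrite the integrand
    set r : Fin k → ℝ → ℝ := fun i t =>
      (gaussianPDFReal (f D i) v t / gaussianPDFReal (f D' i) v t) ^ α with hr_def
    have hr_nonneg : ∀ i t, 0 ≤ r i t := fun i t => Real.rpow_nonneg
      (div_nonneg (gaussianPDFReal_nonneg _ _ _) (gaussianPDFReal_nonneg _ _ _)) α
    have hae : ∀ᵐ x ∂(A D'), ((A D).rnDeriv (A D') x).toReal ^ α = ∏ i, r i (x i) := by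
      filter_upwards [hrn] with x hx
      rw [hx]
      have h1 : (F x / G x).toReal = ∏ i, gaussianPDFReal (f D i) v (x i)
          / gaussianPDFReal (f D' i) v (x i) := by
        rw [ENNReal.toReal_div, hF_def, hG_def]
        simp only [ENNReal.toReal_prod]
        rw [← Finset.prod_div_distrib]
        refine Finset.prod_congr rfl fun i _ => ?_
        rw [show gaussianPDF (f D i) v (x i) = ENNReal.ofReal (gaussianPDFReal (f D i) v (x i))
            from rfl,
          show gaussianPDF (f D' i) v (x i) = ENNReal.ofReal (gaussianPDFReal (f D' i) v (x i))
            from rfl,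
          ENNReal.toReal_ofReal (gaussianPDFReal_nonneg _ _ _),
          ENNReal.toReal_ofReal (gaussianPDFReal_nonneg _ _ _)]
      rw [h1, ← Real.finset_prod_rpow _ _ (fun i _ =>
        div_nonneg (gaussianPDFReal_nonneg _ _ _) (gaussianPDFReal_nonneg _ _ _)) α]
    -- compute the integral
    have hkey : ∫ x, ((A D).rnDeriv (A D') x).toReal ^ α ∂(A D')
        = Real.exp (α * (α - 1) * (∑ i, (f D i - f D' i) ^ 2) / (2 * v)) := by
      rw [integral_congr_ae hae]
      have hmeas_r : ∀ i, Measurable (r i) := fun i =>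
        (aux_ratio_cont (f D i) (f D' i) hv α).measurable
      have hprod_meas : Measurable fun x : Fin k → ℝ => ∏ i, r i (x i) :=
        Finset.measurable_prod _ fun i _ => (hmeas_r i).comp (measurable_pi_apply i)
      rw [integral_eq_lintegral_of_nonneg_ae
        (ae_of_all _ fun x => Finset.prod_nonneg fun i _ => hr_nonneg i (x i))
        hprod_meas.aestronglyMeasurable]
      have h2 : ∀ x : Fin k → ℝ, ENNReal.ofReal (∏ i, r i (x i))
          = ∏ i, ENNReal.ofReal (r i (x i)) :=
        fun x => ENNReal.ofReal_prod_of_nonneg fun i _ => hr_nonneg i (x i)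
      simp_rw [h2]
      rw [hA D']
      rw [aux_lintegral_pi _ _ (fun i => (hmeas_r i).ennreal_ofReal)]
      have h3 : ∀ i : Fin k, ∫⁻ t, ENNReal.ofReal (r i t) ∂gaussianReal (f D' i) v
          = ENNReal.ofReal (Real.exp (α * (α - 1) * (f D i - f D' i) ^ 2 / (2 * v))) :=
        fun i => aux_onedim (f D i) (f D' i) hv α
      simp_rw [h3]
      rw [← ENNReal.ofReal_prod_of_nonneg fun i _ => (Real.exp_pos _).le,
        ← Real.exp_sum, ENNReal.toReal_ofReal (Real.exp_pos _).le]
      congr 1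
      rw [Finset.mul_sum, Finset.sum_div]
    unfold renyiDiv
    rw [hkey, Real.log_exp]
    have hT : (∑ i, (f D i - f D' i) ^ 2) ≤ Δ ^ 2 := by
      have h1 : ∑ i, (f D i - f D' i) ^ 2 = ‖f D - f D'‖ ^ 2 := by
        rw [EuclideanSpace.norm_eq, Real.sq_sqrt (Finset.sum_nonneg fun i _ => sq_nonneg _)]
        refine Finset.sum_congr rfl fun i _ => ?_
        rw [show (f D - f D') i = f D i - f D' i from rfl, Real.norm_eq_abs, sq_abs]
      rw [h1]
      exact pow_le_pow_left₀ (norm_nonneg _) (hΔ D D' hN) 2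
    set T := ∑ i, (f D i - f D' i) ^ 2 with hT_def
    have hT0 : 0 ≤ T := Finset.sum_nonneg fun i _ => sq_nonneg _
    have heq : (α - 1)⁻¹ * (α * (α - 1) * T / (2 * v)) = α * T / (2 * (v:ℝ)) := by
      field_simp
    rw [heq]
    have hstep : α * T / (2 * (v:ℝ)) ≤ α * Δ ^ 2 / (2 * (v:ℝ)) := by
      gcongr
    refine le_trans hstep (le_of_eq ?_)
    rw [hvco]
    field_simp
end

section
/- Rényi divergence between shifted Gaussians of equal variance: for all μ, ν ∈ ℝ^k, s > 0, and α > 1, the Rényi divergence of order α between the product Gaussian measure with independent coordinates N(μ_i, s²) and the product Gaussian measure with independent coordinates N(ν_i, s²) equals α·‖μ − ν‖₂²/(2s²). In particular, for the one-dimensional case, D_α(N(μ, s²) ‖ N(ν, s²)) = α·(μ − ν)²/(2s²). -/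
open MeasureTheory ProbabilityTheory

open Finset
open scoped ENNReal NNReal Real

namespace RenyiAux

lemma lintegral_pi_prod {n : ℕ} (μ : Fin n → Measure ℝ) [∀ i, SigmaFinite (μ i)]
    (f : Fin n → ℝ → ℝ≥0∞) (hf : ∀ i, Measurable (f i)) :
    ∫⁻ x : Fin n → ℝ, ∏ i, f i (x i) ∂Measure.pi μ = ∏ i, ∫⁻ x, f i x ∂μ i := by
  induction n with
  | zero => simp [Measure.pi_univ]
  | succ n ih =>
      have h := (measurePreserving_piFinSuccAbove μ 0)
      set g : (Fin n → ℝ) → ℝ≥0∞ := fun y => ∏ i : Fin n, f i.succ (y i) with hg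
      have hgm : Measurable g :=
        Finset.measurable_prod _ fun i _ => (hf i.succ).comp (measurable_pi_apply i)
      have hFm : Measurable (fun p : ℝ × (Fin n → ℝ) => f 0 p.1 * g p.2) :=
        ((hf 0).comp measurable_fst).mul (hgm.comp measurable_snd)
      calc ∫⁻ x : Fin (n+1) → ℝ, ∏ i, f i (x i) ∂Measure.pi μ
          = ∫⁻ p : ℝ × (Fin n → ℝ), f 0 p.1 * g p.2
              ∂((μ 0).prod (Measure.pi fun j => μ ((0 : Fin (n+1)).succAbove j))) := by
            rw [← h.map_eq, lintegral_map hFm h.measurable]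
            refine lintegral_congr fun x => ?_
            rw [Fin.prod_univ_succ, hg]
            simp [MeasurableEquiv.piFinSuccAbove, Fin.succAbove_zero, Fin.tail]
        _ = (∫⁻ x, f 0 x ∂μ 0) * ∫⁻ y, g y ∂Measure.pi fun j => μ ((0 : Fin (n+1)).succAbove j) :=
            lintegral_prod_mul (hf 0).aemeasurable hgm.aemeasurable
        _ = ∏ i, ∫⁻ x, f i x ∂μ i := by
            rw [Fin.prod_univ_succ, hg]
            congr 1
            rw [show (fun j : Fin n => μ ((0 : Fin (n+1)).succAbove j)) = fun j => μ j.succ by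
              simp [Fin.succAbove_zero]]
            exact ih (fun j => μ j.succ) (fun j => f j.succ) (fun j => hf j.succ)

lemma pi_withDensity {n : ℕ} (μ : Fin n → Measure ℝ) [∀ i, SigmaFinite (μ i)]
    (f : Fin n → ℝ → ℝ≥0∞) (hf : ∀ i, Measurable (f i))
    [∀ i, SigmaFinite ((μ i).withDensity (f i))] :
    Measure.pi (fun i => (μ i).withDensity (f i))
      = (Measure.pi μ).withDensity (fun x => ∏ i, f i (x i)) := by
  refine Measure.pi_eq fun s hs => ?_
  rw [withDensity_apply _ (MeasurableSet.univ_pi hs)]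
  have key : ∀ x : Fin n → ℝ,
      (Set.pi Set.univ s).indicator (fun x => ∏ i, f i (x i)) x
        = ∏ i, (s i).indicator (f i) (x i) := by
    intro x
    by_cases hx : x ∈ Set.pi Set.univ s
    · rw [Set.indicator_of_mem hx]
      exact Finset.prod_congr rfl fun i _ =>
        (Set.indicator_of_mem (hx i (Set.mem_univ i)) _).symm
    · rw [Set.indicator_of_notMem hx]
      rw [Set.mem_univ_pi] at hx
      push_neg at hx
      obtain ⟨i, hi⟩ := hx
      exact (Finset.prod_eq_zero (Finset.mem_univ i)
        (Set.indicator_of_notMem hi _)).symm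
  rw [← lintegral_indicator (MeasurableSet.univ_pi hs)]
  simp_rw [key]
  rw [lintegral_pi_prod μ _ (fun i => (hf i).indicator (hs i))]
  exact Finset.prod_congr rfl fun i _ => by
    rw [lintegral_indicator (hs i), ← withDensity_apply _ (hs i)]

lemma gaussianReal_eq_withDensity (m n : ℝ) {v : ℝ≥0} (hv : v ≠ 0) :
    gaussianReal m v = (gaussianReal n v).withDensity
      (fun x => gaussianPDF m v x / gaussianPDF n v x) := by
  rw [gaussianReal_of_var_ne_zero m hv, gaussianReal_of_var_ne_zero n hv,
    ← withDensity_mul _ (g := fun x => gaussianPDF m v x / gaussianPDF n v x) (measurable_gaussianPDF n v)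
      ((measurable_gaussianPDF m v).div (measurable_gaussianPDF n v))]
  congr 1
  funext x
  exact (ENNReal.mul_div_cancel' (fun h => absurd h (gaussianPDF_pos n hv x).ne')
    (fun h => absurd h (by simp [gaussianPDF]))).symm

lemma rnDeriv_gaussianReal_gaussianReal (m n : ℝ) {v : ℝ≥0} (hv : v ≠ 0) :
    (gaussianReal m v).rnDeriv (gaussianReal n v)
      =ᵐ[gaussianReal n v] fun x => gaussianPDF m v x / gaussianPDF n v x := by
  nth_rewrite 1 [gaussianReal_eq_withDensity m n hv]
  exact Measure.rnDeriv_withDensity _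
    ((measurable_gaussianPDF m v).div (measurable_gaussianPDF n v))

lemma gaussian_pointwise (m n x α : ℝ) {v : ℝ≥0} (hv : v ≠ 0) :
    gaussianPDFReal n v x * (gaussianPDFReal m v x / gaussianPDFReal n v x) ^ α
      = Real.exp (α * (α - 1) * (m - n) ^ 2 / (2 * v))
        * gaussianPDFReal (α * m + (1 - α) * n) v x := by
  have hvpos : (0:ℝ) < (v:ℝ) := by positivity
  unfold gaussianPDFReal
  have hc : (0:ℝ) < (√(2 * π * v))⁻¹ := by
    rw [inv_pos]
    exact Real.sqrt_pos.mpr (by positivity)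
  rw [mul_div_mul_left _ _ hc.ne', ← Real.exp_sub, ← Real.exp_mul, mul_assoc,
    ← Real.exp_add, mul_left_comm, ← Real.exp_add]
  congr 2
  field_simp
  ring

lemma integral_ratio_rpow (m n α : ℝ) {v : ℝ≥0} (hv : v ≠ 0) :
    ∫ x, ((gaussianPDF m v x / gaussianPDF n v x).toReal) ^ α ∂(gaussianReal n v)
      = Real.exp (α * (α - 1) * (m - n) ^ 2 / (2 * v)) := by
  rw [gaussianReal_of_var_ne_zero n hv]
  have hdef : gaussianPDF n v = fun x => ((gaussianPDFReal n v x).toNNReal : ℝ≥0∞) := rfl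
  rw [hdef, integral_withDensity_eq_integral_smul (measurable_gaussianPDFReal n v).real_toNNReal]
  have heq : ∀ x : ℝ, (gaussianPDFReal n v x).toNNReal
        • ((gaussianPDF m v x / gaussianPDF n v x).toReal) ^ α
      = Real.exp (α * (α - 1) * (m - n) ^ 2 / (2 * v))
        * gaussianPDFReal (α * m + (1 - α) * n) v x := by
    intro x
    rw [NNReal.smul_def, Real.coe_toNNReal _ (gaussianPDFReal_nonneg n v x),
      ENNReal.toReal_div]
    show gaussianPDFReal n v x * ((ENNReal.ofReal (gaussianPDFReal m v x)).toReal
      / (ENNReal.ofReal (gaussianPDFReal n v x)).toReal) ^ α = _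
    rw [ENNReal.toReal_ofReal (gaussianPDFReal_nonneg m v x),
      ENNReal.toReal_ofReal (gaussianPDFReal_nonneg n v x)]
    exact gaussian_pointwise m n x α hv
  beta_reduce
  simp only [show ∀ x : ℝ, ((gaussianPDFReal n v x).toNNReal : ℝ≥0∞) = gaussianPDF n v x from fun _ => rfl]
  rw [integral_congr_ae (Filter.Eventually.of_forall heq), MeasureTheory.integral_const_mul, integral_gaussianPDFReal_eq_one _ hv, mul_one]

lemma renyiDiv_gaussian_1d (m n : ℝ) {s α : ℝ} (hs : 0 < s) (hα : 1 < α) :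
    renyiDiv α (gaussianReal m ((s ^ 2).toNNReal)) (gaussianReal n ((s ^ 2).toNNReal))
      = α * (m - n) ^ 2 / (2 * s ^ 2) := by
  set v : ℝ≥0 := (s ^ 2).toNNReal with hv
  have hv0 : v ≠ 0 := by
    simp only [hv, ne_eq, Real.toNNReal_eq_zero, not_le]
    positivity
  have hvr : ((v : ℝ)) = s ^ 2 := Real.coe_toNNReal _ (by positivity)
  have hint : ∫ x, (((gaussianReal m v).rnDeriv (gaussianReal n v)) x).toReal ^ α
        ∂(gaussianReal n v)
      = Real.exp (α * (α - 1) * (m - n) ^ 2 / (2 * v)) := by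
    rw [← integral_ratio_rpow m n α hv0]
    refine integral_congr_ae ?_
    filter_upwards [rnDeriv_gaussianReal_gaussianReal m n hv0] with x hx
    rw [hx]
  rw [renyiDiv, hint, Real.log_exp, hvr]
  have h1 : α - 1 ≠ 0 := sub_ne_zero.mpr hα.ne'
  have h2 : s ^ 2 ≠ 0 := by positivity
  field_simp

lemma integral_pi_prod_real {n : ℕ} (Q : Fin n → Measure ℝ) [∀ i, SigmaFinite (Q i)]
    (h : Fin n → ℝ → ℝ) :
    ∫ x : Fin n → ℝ, ∏ i, h i (x i) ∂Measure.pi Q = ∏ i, ∫ x, h i x ∂Q i :=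
  MeasureTheory.integral_fin_nat_prod_eq_prod (μ := Q) h

lemma renyiDiv_gaussian_pi (k : ℕ) (μ ν : EuclideanSpace ℝ (Fin k)) {s α : ℝ}
    (hs : 0 < s) (hα : 1 < α) :
    renyiDiv α (Measure.pi fun i => gaussianReal (μ i) ((s ^ 2).toNNReal))
               (Measure.pi fun i => gaussianReal (ν i) ((s ^ 2).toNNReal))
      = α * ‖μ - ν‖ ^ 2 / (2 * s ^ 2) := by
  set v : ℝ≥0 := (s ^ 2).toNNReal with hv
  have hv0 : v ≠ 0 := by
    simp only [hv, ne_eq, Real.toNNReal_eq_zero, not_le]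
    positivity
  have hvr : ((v : ℝ)) = s ^ 2 := Real.coe_toNNReal _ (by positivity)
  set g : Fin k → ℝ → ℝ≥0∞ :=
    fun i x => gaussianPDF (μ i) v x / gaussianPDF (ν i) v x with hg
  have hgm : ∀ i, Measurable (g i) := fun i =>
    (measurable_gaussianPDF _ v).div (measurable_gaussianPDF _ v)
  set G : (Fin k → ℝ) → ℝ≥0∞ := fun x => ∏ i, g i (x i) with hG
  have hGm : Measurable G :=
    Finset.measurable_prod _ fun i _ => (hgm i).comp (measurable_pi_apply i)
  have h1 : ∀ i, gaussianReal (μ i) v = (gaussianReal (ν i) v).withDensity (g i) :=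
    fun i => gaussianReal_eq_withDensity _ _ hv0
  haveI hsig : ∀ i, SigmaFinite ((gaussianReal (ν i) v).withDensity (g i)) := fun i => by
    rw [← h1 i]; infer_instance
  have hpi : Measure.pi (fun i => gaussianReal (μ i) v)
      = (Measure.pi fun i => gaussianReal (ν i) v).withDensity G := by
    rw [show (fun i => gaussianReal (μ i) v)
        = fun i => (gaussianReal (ν i) v).withDensity (g i) from funext h1]
    exact pi_withDensity _ _ hgm
  have hrn : (Measure.pi (fun i => gaussianReal (μ i) v)).rnDeriv
        (Measure.pi fun i => gaussianReal (ν i) v)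
      =ᵐ[Measure.pi fun i => gaussianReal (ν i) v] G := by
    rw [hpi]
    exact Measure.rnDeriv_withDensity _ hGm
  have hint : ∫ x, (((Measure.pi (fun i => gaussianReal (μ i) v)).rnDeriv
          (Measure.pi fun i => gaussianReal (ν i) v)) x).toReal ^ α
        ∂(Measure.pi fun i => gaussianReal (ν i) v)
      = Real.exp (α * (α - 1) * (∑ i, (μ i - ν i) ^ 2) / (2 * s ^ 2)) := by
    have step1 : ∫ x, (((Measure.pi (fun i => gaussianReal (μ i) v)).rnDeriv
            (Measure.pi fun i => gaussianReal (ν i) v)) x).toReal ^ α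
          ∂(Measure.pi fun i => gaussianReal (ν i) v)
        = ∫ x : Fin k → ℝ, ∏ i, ((g i (x i)).toReal) ^ α
          ∂(Measure.pi fun i => gaussianReal (ν i) v) := by
      refine integral_congr_ae ?_
      filter_upwards [hrn] with x hx
      rw [hx, hG]
      simp only
      rw [ENNReal.toReal_prod]
      exact (Real.finset_prod_rpow _ _ (fun i _ => ENNReal.toReal_nonneg) _).symm
    rw [step1, integral_pi_prod_real (fun i => gaussianReal (ν i) v)
      (fun i x => ((g i x).toReal) ^ α)]
    have step2 : ∀ i : Fin k, ∫ x, ((g i x).toReal) ^ α ∂(gaussianReal (ν i) v)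
        = Real.exp (α * (α - 1) * (μ i - ν i) ^ 2 / (2 * s ^ 2)) := fun i => by
      rw [hg]
      simp only
      rw [integral_ratio_rpow _ _ _ hv0, hvr]
    rw [Finset.prod_congr rfl fun i _ => step2 i, ← Real.exp_sum]
    congr 1
    rw [← Finset.sum_div, ← Finset.mul_sum]
  have hnorm : ‖μ - ν‖ ^ 2 = ∑ i, (μ i - ν i) ^ 2 := by
    rw [EuclideanSpace.norm_eq, Real.sq_sqrt (by positivity)]
    exact Finset.sum_congr rfl fun i _ => by
      simp [Real.norm_eq_abs, sq_abs]
  rw [renyiDiv, hint, Real.log_exp, hnorm]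
  have h1' : α - 1 ≠ 0 := sub_ne_zero.mpr hα.ne'
  have h2 : s ^ 2 ≠ 0 := by positivity
  field_simp

end RenyiAux

/-- **Rényi divergence between shifted Gaussians of equal variance.** For all
`μ, ν ∈ ℝ^k`, `s > 0` and `α > 1`, the Rényi divergence of order `α` between the
product Gaussian with independent coordinates `N(μ_i, s²)` and the one with
coordinates `N(ν_i, s²)` equals `α·‖μ − ν‖₂²/(2s²)`. In particular, in dimension one,
`D_α(N(m, s²) ‖ N(n, s²)) = α·(m − n)²/(2s²)`. -/
theorem renyiDiv_gaussian_shift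
    (k : ℕ) (μ ν : EuclideanSpace ℝ (Fin k)) (s α : ℝ) (hs : 0 < s) (hα : 1 < α) :
    renyiDiv α (Measure.pi fun i => gaussianReal (μ i) ((s ^ 2).toNNReal))
               (Measure.pi fun i => gaussianReal (ν i) ((s ^ 2).toNNReal))
      = α * ‖μ - ν‖ ^ 2 / (2 * s ^ 2) ∧
    (∀ m n : ℝ,
      renyiDiv α (gaussianReal m ((s ^ 2).toNNReal)) (gaussianReal n ((s ^ 2).toNNReal))
        = α * (m - n) ^ 2 / (2 * s ^ 2)) := by
  exact ⟨RenyiAux.renyiDiv_gaussian_pi k μ ν hs hα,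
    fun m n => RenyiAux.renyiDiv_gaussian_1d m n hs hα⟩
end

section
/- The exponential mechanism satisfies ε²/8-zCDP: let C be a nonempty finite candidate set, and for each i ∈ C let q_i be a real-valued score function on datasets with sensitivity at most Δ, i.e., |q_i(D) − q_i(D')| ≤ Δ for all neighboring datasets D ≃ D'. Let ε > 0 and define the mechanism A(D) as the probability distribution on C assigning to each r ∈ C probability proportional to exp(ε·q_r(D)/(2Δ)). Then for all neighboring D ≃ D' and all α > 1, D_α(A(D) ‖ A(D')) ≤ α·ε²/8. -/
open scoped BigOperators

/-- The Rényi divergence of order `α > 1` between two probability mass functions on a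
finite set: `D_α(P ‖ Q) = (1/(α−1)) · log Σ_r P(r)^α · Q(r)^{1−α}` (real powers). -/
noncomputable def renyiDivPMF {C : Type*} [Fintype C] (α : ℝ) (P Q : C → ℝ) : ℝ :=
  (α - 1)⁻¹ * Real.log (∑ r, P r ^ α * Q r ^ (1 - α))


lemma em_g_pos (p : ℝ) (hp0 : 0 ≤ p) (hp1 : p ≤ 1) (t : ℝ) :
    0 < 1 - p + p * Real.exp t := by
  rcases eq_or_lt_of_le hp0 with h | h
  · simp [← h]
  · nlinarith [Real.exp_pos t, mul_pos h (Real.exp_pos t)]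

/-- Kernel of Hoeffding's lemma: `log(1 - p + p·eᵗ) ≤ t·p + t²/8`. -/
lemma em_key (p : ℝ) (hp0 : 0 ≤ p) (hp1 : p ≤ 1) (t : ℝ) :
    Real.log (1 - p + p * Real.exp t) ≤ t * p + t ^ 2 / 8 := by
  set g : ℝ → ℝ := fun t => 1 - p + p * Real.exp t with hgdef
  have hgpos : ∀ t, 0 < g t := em_g_pos p hp0 hp1
  set f1 : ℝ → ℝ := fun t => p + t / 4 - p * Real.exp t / g t with hf1def
  set f : ℝ → ℝ := fun t => t * p + t ^ 2 / 8 - Real.log (g t) with hfdef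
  have hgd : ∀ t, HasDerivAt g (p * Real.exp t) t := fun t => by
    exact ((Real.hasDerivAt_exp t).const_mul p).const_add (1 - p)
  have hfd : ∀ t, HasDerivAt f (f1 t) t := by
    intro t
    have hlog : HasDerivAt (fun t => Real.log (g t)) (p * Real.exp t / g t) t :=
      (hgd t).log (hgpos t).ne'
    have h1 : HasDerivAt (fun t : ℝ => t * p + t ^ 2 / 8) (p + t / 4) t := by
      have ha : HasDerivAt (fun t : ℝ => t * p) p t := by
        simpa using (hasDerivAt_id t).mul_const p
      have hb : HasDerivAt (fun t : ℝ => t ^ 2 / 8) (t / 4) t := by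
        have := (hasDerivAt_pow 2 t).div_const 8
        convert this using 1
        · rfl
        · rfl
        · norm_num
          ring
      exact ha.add hb
    exact h1.sub hlog
  have hf1d : ∀ t, HasDerivAt f1
      (1 / 4 - (p * Real.exp t * g t - p * Real.exp t * (p * Real.exp t)) / (g t) ^ 2) t := by
    intro t
    have hnum : HasDerivAt (fun t => p * Real.exp t) (p * Real.exp t) t :=
      (Real.hasDerivAt_exp t).const_mul p
    have hdiv : HasDerivAt (fun t => p * Real.exp t / g t)
        ((p * Real.exp t * g t - p * Real.exp t * (p * Real.exp t)) / (g t) ^ 2) t :=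
      hnum.div (hgd t) (hgpos t).ne'
    have hlin : HasDerivAt (fun t : ℝ => p + t / 4) (1 / 4) t := by
      simpa using ((hasDerivAt_id t).div_const 4).const_add p
    exact hlin.sub hdiv
  have hd1 : ∀ t, 0 ≤ 1 / 4 - (p * Real.exp t * g t - p * Real.exp t * (p * Real.exp t)) / (g t) ^ 2 := by
    intro t
    have hgt := hgpos t
    have hE := Real.exp_pos t
    rw [sub_nonneg, div_le_iff₀ (by positivity)]
    have hgeq : g t = 1 - p + p * Real.exp t := rfl
    nlinarith [sq_nonneg (1 - p - p * Real.exp t)]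
  have hmono1 : Monotone f1 := by
    refine monotone_of_hasDerivAt_nonneg (f' := fun t =>
      1 / 4 - (p * Real.exp t * g t - p * Real.exp t * (p * Real.exp t)) / (g t) ^ 2) hf1d ?_
    intro t; exact hd1 t
  have hf10 : f1 0 = 0 := by simp [hf1def, hgdef]
  have hf0 : f 0 = 0 := by simp [hfdef, hgdef]
  have hft : 0 ≤ f t := by
    rcases le_or_gt 0 t with ht | ht
    · have hm : MonotoneOn f (Set.Ici (0:ℝ)) := by
        refine monotoneOn_of_hasDerivWithinAt_nonneg (f' := f1) (convex_Ici 0)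
          (fun x _ => (hfd x).continuousAt.continuousWithinAt)
          (fun x hx => (hfd x).hasDerivWithinAt) ?_
        intro x hx
        rw [interior_Ici] at hx
        have : f1 0 ≤ f1 x := hmono1 (le_of_lt hx)
        linarith [hf10 ▸ this]
      have := hm (Set.self_mem_Ici) (Set.mem_Ici.2 ht) ht
      linarith [hf0 ▸ this]
    · have hm : AntitoneOn f (Set.Iic (0:ℝ)) := by
        refine antitoneOn_of_hasDerivWithinAt_nonpos (f' := f1) (convex_Iic 0)
          (fun x _ => (hfd x).continuousAt.continuousWithinAt)
          (fun x hx => (hfd x).hasDerivWithinAt) ?_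
        intro x hx
        rw [interior_Iic] at hx
        have : f1 x ≤ f1 0 := hmono1 (le_of_lt hx)
        linarith [hf10 ▸ this]
      have := hm (Set.mem_Iic.2 ht.le) (Set.self_mem_Iic) ht.le
      linarith [hf0 ▸ this]
  have : Real.log (g t) ≤ t * p + t ^ 2 / 8 := by
    have := hft
    simp only [hfdef] at this
    linarith
  exact this

/-- Discrete Hoeffding lemma. -/
lemma em_hoeffding {C : Type*} [Fintype C] (w X : C → ℝ)
    (hw : ∀ r, 0 ≤ w r) (hsum : ∑ r, w r = 1)
    {a b : ℝ} (hab : a < b) (ha : ∀ r, a ≤ X r) (hb : ∀ r, X r ≤ b) (l : ℝ) :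
    ∑ r, w r * Real.exp (l * X r) ≤
      Real.exp (l * (∑ r, w r * X r) + l ^ 2 * (b - a) ^ 2 / 8) := by
  have hba : (0:ℝ) < b - a := by linarith
  set μ : ℝ := ∑ r, w r * X r with hμ
  have hμa : a ≤ μ := by
    calc a = ∑ r, w r * a := by rw [← Finset.sum_mul, hsum, one_mul]
    _ ≤ μ := Finset.sum_le_sum fun r _ => mul_le_mul_of_nonneg_left (ha r) (hw r)
  have hμb : μ ≤ b := by
    calc μ ≤ ∑ r, w r * b := Finset.sum_le_sum fun r _ => mul_le_mul_of_nonneg_left (hb r) (hw r)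
    _ = b := by rw [← Finset.sum_mul, hsum, one_mul]
  set p : ℝ := (μ - a) / (b - a) with hp
  have hp0 : 0 ≤ p := div_nonneg (by linarith) hba.le
  have hp1 : p ≤ 1 := (div_le_one hba).2 (by linarith)
  -- pointwise convexity bound
  have hpt : ∀ r, Real.exp (l * X r) ≤
      ((b - X r) * Real.exp (l * a) + (X r - a) * Real.exp (l * b)) / (b - a) := by
    intro r
    have hu : 0 ≤ (b - X r) / (b - a) := div_nonneg (by linarith [hb r]) hba.le
    have hv : 0 ≤ (X r - a) / (b - a) := div_nonneg (by linarith [ha r]) hba.le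
    have huv : (b - X r) / (b - a) + (X r - a) / (b - a) = 1 := by
      field_simp
      ring
    have hc := convexOn_exp.2 (Set.mem_univ (l * a)) (Set.mem_univ (l * b)) hu hv huv
    simp only [smul_eq_mul] at hc
    have harg : (b - X r) / (b - a) * (l * a) + (X r - a) / (b - a) * (l * b) = l * X r := by
      field_simp
      ring
    rw [harg] at hc
    calc Real.exp (l * X r) ≤ (b - X r) / (b - a) * Real.exp (l * a)
        + (X r - a) / (b - a) * Real.exp (l * b) := hc
      _ = ((b - X r) * Real.exp (l * a) + (X r - a) * Real.exp (l * b)) / (b - a) := by ring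
  have hsum1 : ∑ r, w r * Real.exp (l * X r) ≤
      ((b - μ) * Real.exp (l * a) + (μ - a) * Real.exp (l * b)) / (b - a) := by
    calc ∑ r, w r * Real.exp (l * X r)
        ≤ ∑ r, w r * (((b - X r) * Real.exp (l * a) + (X r - a) * Real.exp (l * b)) / (b - a)) :=
          Finset.sum_le_sum fun r _ => mul_le_mul_of_nonneg_left (hpt r) (hw r)
      _ = ((∑ r, w r * (b - X r)) * Real.exp (l * a)
            + (∑ r, w r * (X r - a)) * Real.exp (l * b)) / (b - a) := by
          rw [Finset.sum_mul, Finset.sum_mul, ← Finset.sum_add_distrib, Finset.sum_div]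
          congr 1; ext r; ring
      _ = ((b - μ) * Real.exp (l * a) + (μ - a) * Real.exp (l * b)) / (b - a) := by
          have h1 : ∑ r, w r * (b - X r) = b - μ := by
            simp only [mul_sub]
            rw [Finset.sum_sub_distrib, ← Finset.sum_mul, hsum, one_mul]
          have h2 : ∑ r, w r * (X r - a) = μ - a := by
            simp only [mul_sub]
            rw [Finset.sum_sub_distrib, ← Finset.sum_mul, hsum, one_mul]
          rw [h1, h2]
  have hform : ((b - μ) * Real.exp (l * a) + (μ - a) * Real.exp (l * b)) / (b - a)
      = Real.exp (l * a) * (1 - p + p * Real.exp (l * (b - a))) := by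
    have he : Real.exp (l * b) = Real.exp (l * a) * Real.exp (l * (b - a)) := by
      rw [← Real.exp_add]; ring_nf
    rw [he, hp]
    field_simp
    ring
  have hkey := em_key p hp0 hp1 (l * (b - a))
  have hgpos := em_g_pos p hp0 hp1 (l * (b - a))
  have hle : 1 - p + p * Real.exp (l * (b - a)) ≤
      Real.exp (l * (b - a) * p + (l * (b - a)) ^ 2 / 8) :=
    (Real.log_le_iff_le_exp hgpos).1 hkey
  calc ∑ r, w r * Real.exp (l * X r)
      ≤ Real.exp (l * a) * (1 - p + p * Real.exp (l * (b - a))) := by rw [← hform]; exact hsum1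
    _ ≤ Real.exp (l * a) * Real.exp (l * (b - a) * p + (l * (b - a)) ^ 2 / 8) :=
        mul_le_mul_of_nonneg_left hle (Real.exp_pos _).le
    _ = Real.exp (l * a + (l * (b - a) * p + (l * (b - a)) ^ 2 / 8)) := by rw [← Real.exp_add]
    _ = Real.exp (l * μ + l ^ 2 * (b - a) ^ 2 / 8) := by
        congr 1
        have : l * (b - a) * p = l * (μ - a) := by
          rw [hp]; field_simp
        rw [this]; ring

/-- **The exponential mechanism satisfies `ε²/8`-zCDP.** Let `C` be a nonempty finite
candidate set and for each `i ∈ C` let `q i` be a score function on datasets with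
sensitivity at most `Δ`. For `ε > 0`, the exponential mechanism `A(D)` assigns to each
candidate `r` probability proportional to `exp(ε·q_r(D)/(2Δ))`. Then for all neighboring
datasets `D ≃ D'` and all `α > 1`, `D_α(A(D) ‖ A(D')) ≤ α·ε²/8`. -/
theorem exponentialMechanism_zCDP
    {Dset C : Type*} [Fintype C] [Nonempty C]
    (Neighboring : Dset → Dset → Prop)
    (q : C → Dset → ℝ) (Δ ε : ℝ) (hΔ : 0 < Δ) (hε : 0 < ε)
    (hsens : ∀ i D D', Neighboring D D' → |q i D - q i D'| ≤ Δ)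
    (A : Dset → C → ℝ)
    (hA : ∀ D r, A D r =
      Real.exp (ε * q r D / (2 * Δ)) / ∑ s, Real.exp (ε * q s D / (2 * Δ))) :
    ∀ D D', Neighboring D D' → ∀ α : ℝ, 1 < α →
      renyiDivPMF α (A D) (A D') ≤ α * ε ^ 2 / 8 := by
  intro D D' hN α hα
  have hα1 : (0:ℝ) < α - 1 := by linarith
  have hZ : (0:ℝ) < ∑ s, Real.exp (ε * q s D / (2 * Δ)) :=
    Finset.sum_pos (fun s _ => Real.exp_pos _) Finset.univ_nonempty
  have hZ' : (0:ℝ) < ∑ s, Real.exp (ε * q s D' / (2 * Δ)) :=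
    Finset.sum_pos (fun s _ => Real.exp_pos _) Finset.univ_nonempty
  set c : ℝ := Real.log (∑ s, Real.exp (ε * q s D' / (2 * Δ)))
    - Real.log (∑ s, Real.exp (ε * q s D / (2 * Δ))) with hc
  set L : C → ℝ := fun r => ε * q r D / (2 * Δ) - ε * q r D' / (2 * Δ) + c with hL
  -- positivity and total mass of P := A D, Q := A D'
  have hPpos : ∀ r, 0 < A D r := fun r => by rw [hA]; positivity
  have hQpos : ∀ r, 0 < A D' r := fun r => by rw [hA]; positivity
  have hPsum : ∑ r, A D r = 1 := by
    simp only [hA]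
    rw [← Finset.sum_div]
    exact div_self hZ.ne'
  -- likelihood-ratio identity P r = Q r * exp (L r)
  have hPQ : ∀ r, A D r = A D' r * Real.exp (L r) := by
    intro r
    have hexp : Real.exp (L r) =
        Real.exp (ε * q r D / (2 * Δ)) / Real.exp (ε * q r D' / (2 * Δ)) *
        ((∑ s, Real.exp (ε * q s D' / (2 * Δ))) / (∑ s, Real.exp (ε * q s D / (2 * Δ)))) := by
      simp only [hL, hc]
      rw [Real.exp_add, Real.exp_sub, Real.exp_sub, Real.exp_log hZ', Real.exp_log hZ]
    rw [hA, hA, hexp]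
    have h1 := (Real.exp_pos (ε * q r D' / (2 * Δ))).ne'
    field_simp
  have hQP : ∀ r, A D r * Real.exp (-1 * L r) = A D' r := by
    intro r
    rw [hPQ r, mul_assoc, ← Real.exp_add,
      show L r + -1 * L r = 0 from by ring, Real.exp_zero, mul_one]
  -- bounds on L
  have hLlow : ∀ r, c - ε / 2 ≤ L r := by
    intro r
    have h := hsens r D D' hN
    have hxy : |ε * q r D / (2 * Δ) - ε * q r D' / (2 * Δ)| ≤ ε / 2 := by
      rw [show ε * q r D / (2 * Δ) - ε * q r D' / (2 * Δ)
          = ε / (2 * Δ) * (q r D - q r D') from by ring]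
      rw [abs_mul, abs_of_pos (by positivity)]
      calc ε / (2 * Δ) * |q r D - q r D'| ≤ ε / (2 * Δ) * Δ := by
            exact mul_le_mul_of_nonneg_left h (by positivity)
        _ = ε / 2 := by field_simp
    have := abs_le.1 hxy
    simp only [hL]
    linarith [this.1]
  have hLhigh : ∀ r, L r ≤ c + ε / 2 := by
    intro r
    have h := hsens r D D' hN
    have hxy : |ε * q r D / (2 * Δ) - ε * q r D' / (2 * Δ)| ≤ ε / 2 := by
      rw [show ε * q r D / (2 * Δ) - ε * q r D' / (2 * Δ)
          = ε / (2 * Δ) * (q r D - q r D') from by ring]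
      rw [abs_mul, abs_of_pos (by positivity)]
      calc ε / (2 * Δ) * |q r D - q r D'| ≤ ε / (2 * Δ) * Δ := by
            exact mul_le_mul_of_nonneg_left h (by positivity)
        _ = ε / 2 := by field_simp
    have := abs_le.1 hxy
    simp only [hL]
    linarith [this.2]
  have hab : c - ε / 2 < c + ε / 2 := by linarith
  have hba : (c + ε / 2) - (c - ε / 2) = ε := by ring
  set μ : ℝ := ∑ r, A D r * L r with hμ
  -- bound the mean of L under P
  have hμle : μ ≤ ε ^ 2 / 8 := by
    have h2 := em_hoeffding (A D) L (fun r => (hPpos r).le) hPsum hab hLlow hLhigh (-1)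
    rw [hba] at h2
    have hQsum : ∑ r, A D' r = 1 := by
      simp only [hA]
      rw [← Finset.sum_div]
      exact div_self hZ'.ne'
    have hLHS : ∑ r, A D r * Real.exp (-1 * L r) = 1 := by
      rw [Finset.sum_congr rfl fun r _ => hQP r, hQsum]
    rw [hLHS] at h2
    have := Real.exp_le_exp.1 (by rw [Real.exp_zero]; exact h2 :
      Real.exp 0 ≤ Real.exp (-1 * μ + (-1) ^ 2 * ε ^ 2 / 8))
    nlinarith
  -- rewrite the Rényi sum
  have hterm : ∀ r, A D r ^ α * A D' r ^ (1 - α) = A D r * Real.exp ((α - 1) * L r) := by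
    intro r
    have h1 : A D r ^ α = A D' r ^ α * Real.exp (L r * α) := by
      rw [hPQ r, Real.mul_rpow (hQpos r).le (Real.exp_pos _).le, ← Real.exp_mul]
    have h2 : A D' r ^ α * A D' r ^ (1 - α) = A D' r := by
      rw [← Real.rpow_add (hQpos r)]
      norm_num
    calc A D r ^ α * A D' r ^ (1 - α)
        = A D' r ^ α * A D' r ^ (1 - α) * Real.exp (L r * α) := by rw [h1]; ring
      _ = A D' r * Real.exp (L r * α) := by rw [h2]
      _ = A D' r * Real.exp (L r) * Real.exp ((α - 1) * L r) := by
          have ht : ∀ t : ℝ, Real.exp (t * α) = Real.exp t * Real.exp ((α - 1) * t) := by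
            intro t
            rw [← Real.exp_add]
            congr 1
            ring
          rw [ht (L r), mul_assoc]
      _ = A D r * Real.exp ((α - 1) * L r) := by rw [← hPQ r]
  have hSpos : 0 < ∑ r, A D r * Real.exp ((α - 1) * L r) :=
    Finset.sum_pos (fun r _ => mul_pos (hPpos r) (Real.exp_pos _)) Finset.univ_nonempty
  have h1 := em_hoeffding (A D) L (fun r => (hPpos r).le) hPsum hab hLlow hLhigh (α - 1)
  rw [hba] at h1
  have hlog : Real.log (∑ r, A D r * Real.exp ((α - 1) * L r))
      ≤ (α - 1) * μ + (α - 1) ^ 2 * ε ^ 2 / 8 :=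
    (Real.log_le_iff_le_exp hSpos).2 h1
  have hlog2 : Real.log (∑ r, A D r * Real.exp ((α - 1) * L r))
      ≤ (α - 1) * (α * ε ^ 2 / 8) := by
    have hmul : (α - 1) * μ ≤ (α - 1) * (ε ^ 2 / 8) :=
      mul_le_mul_of_nonneg_left hμle hα1.le
    nlinarith
  rw [renyiDivPMF]
  rw [Finset.sum_congr rfl fun r _ => hterm r]
  calc (α - 1)⁻¹ * Real.log (∑ r, A D r * Real.exp ((α - 1) * L r))
      ≤ (α - 1)⁻¹ * ((α - 1) * (α * ε ^ 2 / 8)) :=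
        mul_le_mul_of_nonneg_left hlog2 (inv_nonneg.2 hα1.le)
    _ = α * ε ^ 2 / 8 := by field_simp
end

section
/- Eckart–Young low-rank approximation theorem (Frobenius norm): let P be a real p × q matrix of rank r with singular values λ₁ ≥ λ₂ ≥ … ≥ λ_r > 0, and let m < r. Then the minimum of ‖P − Q‖_F² over all real p × q matrices Q with rank(Q) ≤ m equals Σ_{t=m+1}^{r} λ_t²; in particular, every matrix Q with rank(Q) ≤ m satisfies ‖P − Q‖_F² ≥ Σ_{t=m+1}^{r} λ_t². -/
open scoped BigOperators

/-- Squared Frobenius norm of a real matrix: `‖A‖_F² = Σ_{j,k} A_{j,k}²`. -/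
noncomputable def frobSq {p q : ℕ} (A : Matrix (Fin p) (Fin q) ℝ) : ℝ :=
  ∑ j, ∑ k, A j k ^ 2

section EckartYoungAux
open Matrix Finset

set_option maxHeartbeats 1000000

lemma frobSq_eq_trace {p q : ℕ} (A : Matrix (Fin p) (Fin q) ℝ) :
    frobSq A = Matrix.trace (Aᴴ * A) := by
  simp [frobSq, Matrix.trace, Matrix.diag, Matrix.mul_apply, sq]
  rw [Finset.sum_comm]

lemma frobSq_nonneg {p q : ℕ} (A : Matrix (Fin p) (Fin q) ℝ) : 0 ≤ frobSq A := by
  apply Finset.sum_nonneg; intro j _; apply Finset.sum_nonneg; intro k _; positivity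


/-- If `W` has orthonormal columns then `frobSq B = frobSq (B*W) + frobSq (B - B*(W*Wᴴ))`. -/
lemma frobSq_split {p q k : ℕ} (B : Matrix (Fin p) (Fin q) ℝ) (W : Matrix (Fin q) (Fin k) ℝ)
    (hW : Wᴴ * W = 1) :
    frobSq B = frobSq (B * W) + frobSq (B - B * (W * Wᴴ)) := by
  set Pi := W * Wᴴ with hPi
  have hPi2 : Pi * Pi = Pi := by
    rw [hPi, Matrix.mul_assoc, ← Matrix.mul_assoc Wᴴ, hW, Matrix.one_mul]
  have hPih : Piᴴ = Pi := by
    rw [hPi, conjTranspose_mul, conjTranspose_conjTranspose]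
  have e1 : frobSq (B * W) = Matrix.trace (Bᴴ * B * Pi) := by
    rw [frobSq_eq_trace, conjTranspose_mul, Matrix.trace_mul_comm,
      Matrix.mul_assoc Bᴴ B Pi, Matrix.trace_mul_comm Bᴴ (B * Pi)]
    congr 1
    simp only [Matrix.mul_assoc, hPi]
  have e2 : frobSq (B - B * Pi) =
      Matrix.trace (Bᴴ * B) - Matrix.trace (Bᴴ * B * Pi) := by
    rw [frobSq_eq_trace]
    have expand : (B - B * Pi)ᴴ * (B - B * Pi)
        = Bᴴ * B - Bᴴ * B * Pi - (Pi * (Bᴴ * B) - Pi * (Bᴴ * B * Pi)) := by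
      simp only [conjTranspose_sub, conjTranspose_mul, hPih, Matrix.sub_mul,
        Matrix.mul_sub, Matrix.mul_assoc]
      abel
    rw [expand, Matrix.trace_sub, Matrix.trace_sub, Matrix.trace_sub]
    have c1 : Matrix.trace (Pi * (Bᴴ * B)) = Matrix.trace (Bᴴ * B * Pi) :=
      Matrix.trace_mul_comm _ _
    have c2 : Matrix.trace (Pi * (Bᴴ * B * Pi)) = Matrix.trace (Bᴴ * B * Pi) := by
      rw [Matrix.trace_mul_comm, Matrix.mul_assoc, hPi2]
    rw [c1, c2]; ring
  rw [e1, e2, frobSq_eq_trace]; ring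

lemma card_filter_le' (q m : ℕ) :
    (Finset.univ.filter (fun s : Fin q => m ≤ (s : ℕ))).card = q - m := by
  have : (Finset.univ.filter (fun s : Fin q => m ≤ (s : ℕ))) =
      (Finset.Ico m q).attachFin (fun x hx => (Finset.mem_Ico.mp hx).2) := by
    ext s; simp [Finset.mem_attachFin, Finset.mem_Ico, s.isLt]
  rw [this, Finset.card_attachFin, Nat.card_Ico]

lemma abel_bound {q m : ℕ} (hmq : m < q) (f : Fin q → ℝ)
    (hf0 : ∀ s, 0 ≤ f s) (hmono : ∀ s t : Fin q, s ≤ t → f t ≤ f s)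
    (d : Fin q → ℝ) (hd0 : ∀ s, 0 ≤ d s) (hd1 : ∀ s, d s ≤ 1)
    (hsum : (q : ℝ) - m ≤ ∑ s, d s) :
    ∑ s ∈ Finset.univ.filter (fun s : Fin q => m ≤ (s : ℕ)), f s ≤ ∑ s, f s * d s := by
  set b := f ⟨m, hmq⟩ with hb
  have hbnn : 0 ≤ b := hf0 _
  set F := Finset.univ.filter (fun s : Fin q => m ≤ (s : ℕ)) with hF
  have hcard : (F.card : ℝ) = (q : ℝ) - m := by
    rw [hF, card_filter_le' q m]; push_cast [Nat.cast_sub hmq.le]; ring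
  have hsplit : ∑ s, f s * d s = ∑ s ∈ F, f s * d s + ∑ s ∈ Fᶜ, f s * d s := by
    rw [add_comm, Finset.sum_compl_add_sum]
  have h1 : ∑ s ∈ Fᶜ, f s * d s ≥ b * ∑ s ∈ Fᶜ, d s := by
    rw [Finset.mul_sum]
    apply Finset.sum_le_sum
    intro s hs
    have hsm : (s : ℕ) < m := by
      simp [hF, Finset.mem_compl, Finset.mem_filter] at hs; omega
    have : b ≤ f s := hmono s ⟨m, hmq⟩ (by simp [Fin.le_def]; omega)
    exact mul_le_mul_of_nonneg_right this (hd0 s)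
  have h2 : ∑ s ∈ F, f s * d s ≥ ∑ s ∈ F, f s + b * (∑ s ∈ F, d s - F.card) := by
    have : ∀ s ∈ F, f s + b * (d s - 1) ≤ f s * d s := by
      intro s hs
      have hsm : m ≤ (s : ℕ) := by simp [hF] at hs; exact hs
      have hfs : f s ≤ b := hmono ⟨m, hmq⟩ s (by simp [Fin.le_def]; omega)
      nlinarith [hd1 s, hd0 s, hf0 s]
    calc ∑ s ∈ F, f s + b * (∑ s ∈ F, d s - F.card)
        = ∑ s ∈ F, (f s + b * (d s - 1)) := by
          rw [Finset.sum_add_distrib]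
          simp [Finset.mul_sum, mul_sub, Finset.sum_sub_distrib]
          ring
      _ ≤ ∑ s ∈ F, f s * d s := Finset.sum_le_sum this
  have hdc : ∑ s ∈ F, d s + ∑ s ∈ Fᶜ, d s = ∑ s, d s := Finset.sum_add_sum_compl F d
  have hdF : 0 ≤ ∑ s ∈ Fᶜ, d s := Finset.sum_nonneg fun s _ => hd0 s
  nlinarith [hsplit, h1, h2, hcard, hsum]

lemma eckart_young_exists (p q m : ℕ) (P : Matrix (Fin p) (Fin q) ℝ) (sv : Fin q → ℝ)
    (e : Fin q ≃ Fin q)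
    (he : ∀ t, (Matrix.isHermitian_conjTranspose_mul_self P).eigenvalues t = (sv (e t)) ^ 2) :
    ∃ Q : Matrix (Fin p) (Fin q) ℝ, Q.rank ≤ m ∧
      frobSq (P - Q) = ∑ t ∈ Finset.univ.filter (fun t : Fin q => m ≤ (t : ℕ)), sv t ^ 2 := by
  classical
  set hA := Matrix.isHermitian_conjTranspose_mul_self P with hhA
  set μ : Fin q → ℝ := hA.eigenvalues with hμ
  set V : Matrix (Fin q) (Fin q) ℝ := (Matrix.IsHermitian.eigenvectorUnitary hA : Matrix (Fin q) (Fin q) ℝ) with hV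
  have hV2 := (Matrix.IsHermitian.eigenvectorUnitary hA).2
  have hVV : star V * V = 1 := Matrix.mem_unitaryGroup_iff'.mp hV2
  have hVV' : V * star V = 1 := Matrix.mem_unitaryGroup_iff.mp hV2
  have spect : Pᴴ * P = V * Matrix.diagonal μ * star V := by
    have := hA.spectral_theorem
    rwa [RCLike.ofReal_real_eq_id, Function.id_comp] at this
  -- truncation diagonal matrices
  set K : Matrix (Fin q) (Fin q) ℝ :=
    Matrix.diagonal (fun t => if ((e t : Fin q) : ℕ) < m then (1:ℝ) else 0) with hK
  set K' : Matrix (Fin q) (Fin q) ℝ :=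
    Matrix.diagonal (fun t => if ((e t : Fin q) : ℕ) < m then (0:ℝ) else 1) with hK'
  refine ⟨P * (V * K * star V), ?_, ?_⟩
  · calc (P * (V * K * star V)).rank ≤ (V * K * star V).rank := Matrix.rank_mul_le_right _ _
      _ ≤ (K * star V).rank := by rw [Matrix.mul_assoc]; exact Matrix.rank_mul_le_right _ _
      _ ≤ K.rank := Matrix.rank_mul_le_left _ _
      _ ≤ m := by
          rw [hK, Matrix.rank_diagonal]
          have : Function.Injective (fun s : {t : Fin q // (if ((e t : Fin q) : ℕ) < m then (1:ℝ) else 0) ≠ 0} =>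
              (⟨(e s.1 : Fin q), by { have := s.2; by_contra h; simp at h; simp [h] at this }⟩ : Fin m)) := by
            intro a b hab
            simp only [Fin.mk.injEq] at hab
            exact Subtype.ext (e.injective (Fin.val_injective hab))
          simpa using Fintype.card_le_of_injective _ this
  · -- frobSq computation
    have hKs' : star K' = K' := by
      rw [Matrix.star_eq_conjTranspose, hK', Matrix.diagonal_conjTranspose]
      simp
    have h1 : K + K' = 1 := by
      ext i j
      rcases eq_or_ne i j with h | h
      · subst h; simp [hK, hK', Matrix.diagonal_apply_eq, Matrix.one_apply]
        split <;> simp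
      · simp [hK, hK', Matrix.diagonal_apply_ne _ h, Matrix.one_apply, h]
    have hsub : P - P * (V * K * star V) = P * (V * K' * star V) := by
      calc P - P * (V * K * star V)
          = P * (V * (K + K') * star V) - P * (V * K * star V) := by
            rw [h1, Matrix.mul_one, hVV', Matrix.mul_one]
        _ = P * (V * K' * star V) := by
            simp only [Matrix.mul_add, Matrix.add_mul]; abel
    set R := V * K' * star V with hR
    rw [hsub, frobSq_eq_trace]
    have hRh : Rᴴ = R := by
      rw [← Matrix.star_eq_conjTranspose, hR]
      simp only [Matrix.star_mul, star_star, hKs']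
      simp only [Matrix.mul_assoc]
    have hK'2 : K' * K' = K' := by
      have hfun : (fun i : Fin q => (if ((e i : Fin q) : ℕ) < m then (0:ℝ) else 1)
          * if ((e i : Fin q) : ℕ) < m then (0:ℝ) else 1)
          = (fun i : Fin q => if ((e i : Fin q) : ℕ) < m then (0:ℝ) else 1) := by
        funext t; split <;> simp
      rw [hK', Matrix.diagonal_mul_diagonal, hfun]
    have hR2 : R * R = R := by
      rw [hR]
      simp only [Matrix.mul_assoc]
      rw [← Matrix.mul_assoc (star V) V (K' * star V), hVV, Matrix.one_mul,
        ← Matrix.mul_assoc K' K' (star V), hK'2]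
    calc Matrix.trace ((P * R)ᴴ * (P * R))
        = Matrix.trace (R * (Pᴴ * P * R)) := by
          rw [conjTranspose_mul, hRh]; congr 1; simp only [Matrix.mul_assoc]
      _ = Matrix.trace (Pᴴ * P * (R * R)) := by
          rw [Matrix.trace_mul_comm]; congr 1; simp only [Matrix.mul_assoc]
      _ = Matrix.trace (Pᴴ * P * R) := by rw [hR2]
      _ = Matrix.trace (V * (Matrix.diagonal μ * (K' * star V))) := by
          rw [spect, hR]
          congr 1
          simp only [Matrix.mul_assoc]
          rw [← Matrix.mul_assoc (star V) V (K' * star V), hVV, Matrix.one_mul]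
      _ = Matrix.trace (Matrix.diagonal μ * (K' * (star V * V))) := by
          rw [Matrix.trace_mul_comm]; congr 1; simp only [Matrix.mul_assoc]
      _ = Matrix.trace (Matrix.diagonal μ * K') := by rw [hVV, Matrix.mul_one]
      _ = ∑ t, (if m ≤ ((e t : Fin q) : ℕ) then sv (e t) ^ 2 else 0) := by
          rw [hK', Matrix.diagonal_mul_diagonal, Matrix.trace_diagonal]
          apply Finset.sum_congr rfl
          intro t _
          rw [he t]
          rcases Nat.lt_or_ge (↑(e t)) m with h | h
          · simp [h, Nat.not_le.mpr h]
          · simp [Nat.not_lt.mpr h, h]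
      _ = ∑ s : Fin q, (if m ≤ (s : ℕ) then sv s ^ 2 else 0) :=
          Equiv.sum_comp e (fun s => if m ≤ (s : ℕ) then sv s ^ 2 else 0)
      _ = ∑ t ∈ Finset.univ.filter (fun t : Fin q => m ≤ (t : ℕ)), sv t ^ 2 :=
          (Finset.sum_filter _ _).symm

lemma eckart_young_lower (p q r m : ℕ) (P : Matrix (Fin p) (Fin q) ℝ)
    (hrank : P.rank = r) (hm : m < r)
    (sv : Fin q → ℝ)
    (hmono : ∀ s t : Fin q, s ≤ t → sv t ≤ sv s)
    (hpos : ∀ t : Fin q, (t : ℕ) < r → 0 < sv t)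
    (hzero : ∀ t : Fin q, r ≤ (t : ℕ) → sv t = 0)
    (e : Fin q ≃ Fin q)
    (he : ∀ t, (Matrix.isHermitian_conjTranspose_mul_self P).eigenvalues t = (sv (e t)) ^ 2)
    (Q : Matrix (Fin p) (Fin q) ℝ) (hQ : Q.rank ≤ m) :
    (∑ t ∈ Finset.univ.filter (fun t : Fin q => m ≤ (t : ℕ)), sv t ^ 2) ≤ frobSq (P - Q) := by
  classical
  have hmq : m < q := lt_of_lt_of_le hm (hrank ▸ P.rank_le_width)
  have hsvnn : ∀ t, 0 ≤ sv t := by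
    intro t
    rcases Nat.lt_or_ge (t : ℕ) r with h | h
    · exact (hpos t h).le
    · exact (hzero t h).ge
  -- spectral data
  set hA := Matrix.isHermitian_conjTranspose_mul_self P with hhA
  set μ : Fin q → ℝ := hA.eigenvalues with hμ
  set V : Matrix (Fin q) (Fin q) ℝ :=
    (Matrix.IsHermitian.eigenvectorUnitary hA : Matrix (Fin q) (Fin q) ℝ) with hV
  have hV2 := (Matrix.IsHermitian.eigenvectorUnitary hA).2
  have hVV : star V * V = 1 := Matrix.mem_unitaryGroup_iff'.mp hV2
  have hVV' : V * star V = 1 := Matrix.mem_unitaryGroup_iff.mp hV2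
  have spect : Pᴴ * P = V * Matrix.diagonal μ * star V := by
    have := hA.spectral_theorem
    rwa [RCLike.ofReal_real_eq_id, Function.id_comp] at this
  -- kernel of Q
  set L : EuclideanSpace ℝ (Fin q) →ₗ[ℝ] (Fin p → ℝ) :=
    Q.mulVecLin ∘ₗ (WithLp.linearEquiv 2 ℝ (Fin q → ℝ)).toLinearMap with hL
  have hrange : LinearMap.range L = LinearMap.range Q.mulVecLin := by
    rw [hL, LinearMap.range_comp, LinearEquiv.range, Submodule.map_top]
  set Ker := LinearMap.ker L with hKer
  set k := Module.finrank ℝ Ker with hk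
  have hkq : Q.rank + k = q := by
    have := LinearMap.finrank_range_add_finrank_ker L
    rw [hrange] at this
    simpa [Matrix.rank, hk, hKer] using this
  set b := stdOrthonormalBasis ℝ Ker with hb
  set W : Matrix (Fin q) (Fin k) ℝ := fun j i => ((b i : EuclideanSpace ℝ (Fin q)) j) with hW
  have hWW : Wᴴ * W = 1 := by
    ext i i'
    have horth := orthonormal_iff_ite.mp b.orthonormal i i'
    rw [Submodule.coe_inner, PiLp.inner_apply] at horth
    simp only [RCLike.inner_apply, starRingEnd_apply, star_trivial] at horth
    rw [Matrix.mul_apply]; simp only [Matrix.conjTranspose_apply, star_trivial, Matrix.one_apply]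
    simp only [hW]
    rw [← horth]; exact Finset.sum_congr rfl fun x _ => by ring
  have hQW : Q * W = 0 := by
    ext j i
    have hmem : L (b i : EuclideanSpace ℝ (Fin q)) = 0 := LinearMap.mem_ker.mp (b i).2
    have hmem' : Q.mulVec (fun s => W s i) = 0 := by
      funext j'
      calc Q.mulVec (fun s => W s i) j' = (L (b i : EuclideanSpace ℝ (Fin q))) j' := rfl
        _ = 0 := by rw [hmem]; rfl
    have := congrFun hmem' j
    simpa [Matrix.mul_apply, Matrix.mulVec, dotProduct] using this
  -- the matrix M and the weights c
  set M : Matrix (Fin q) (Fin k) ℝ := star V * W with hM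
  have hMh : Mᴴ = Wᴴ * V := by
    rw [hM, conjTranspose_mul, Matrix.star_eq_conjTranspose, conjTranspose_conjTranspose]
  have hMM : Mᴴ * M = 1 := by
    rw [hMh, hM, Matrix.mul_assoc, ← Matrix.mul_assoc V (star V) W, hVV', Matrix.one_mul, hWW]
  set c : Fin q → ℝ := fun t => ∑ i, (M t i) ^ 2 with hc
  have hc0 : ∀ t, 0 ≤ c t := fun t => Finset.sum_nonneg fun i _ => sq_nonneg _
  -- idempotent N = M Mᴴ, diagonal entries in [0,1]
  set N : Matrix (Fin q) (Fin q) ℝ := M * Mᴴ with hN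
  have hNN : N * N = N := by
    rw [hN, Matrix.mul_assoc, ← Matrix.mul_assoc Mᴴ M Mᴴ, hMM, Matrix.one_mul]
  have hcN : ∀ t, c t = N t t := by
    intro t
    simp [hc, hN, Matrix.mul_apply, Matrix.conjTranspose_apply, sq]
  have hNsymm : ∀ s t, N s t = N t s := by
    intro s t
    simp [hN, Matrix.mul_apply, Matrix.conjTranspose_apply, mul_comm]
  have hc1 : ∀ t, c t ≤ 1 := by
    intro t
    have h1 : N t t = ∑ s, N t s * N s t := by
      conv_lhs => rw [← hNN]
      simp [Matrix.mul_apply]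
    have h2 : (N t t) ^ 2 ≤ N t t := by
      have hnn : ∀ s, 0 ≤ N t s * N s t := fun s => by rw [hNsymm s t]; exact mul_self_nonneg _
      calc (N t t) ^ 2 = N t t * N t t := sq _
        _ ≤ ∑ s, N t s * N s t :=
            Finset.single_le_sum (fun s _ => hnn s) (Finset.mem_univ t)
        _ = N t t := h1.symm
    nlinarith [hcN t, hc0 t]
  have hcsum : ∑ t, c t = (k : ℝ) := by
    have : ∑ t, c t = Matrix.trace (Mᴴ * M) := by
      simp [hc, Matrix.trace, Matrix.diag, Matrix.mul_apply, Matrix.conjTranspose_apply, sq]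
      rw [Finset.sum_comm]
    rw [this, hMM, Matrix.trace_one]
    simp
  -- frobSq chain
  have step1 : frobSq (P * W) ≤ frobSq (P - Q) := by
    have := frobSq_split (P - Q) W hWW
    have h2 : (P - Q) * W = P * W := by rw [Matrix.sub_mul, hQW, sub_zero]
    have := this
    rw [h2] at this
    have h3 := frobSq_nonneg ((P - Q) - (P - Q) * (W * Wᴴ))
    linarith
  have step2 : frobSq (P * W) = ∑ t, μ t * c t := by
    rw [frobSq_eq_trace, conjTranspose_mul]
    have hexp : Wᴴ * Pᴴ * (P * W) = Mᴴ * (Matrix.diagonal μ * M) := by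
      calc Wᴴ * Pᴴ * (P * W) = Wᴴ * ((Pᴴ * P) * W) := by simp only [Matrix.mul_assoc]
        _ = Wᴴ * ((V * Matrix.diagonal μ * star V) * W) := by rw [spect]
        _ = (Wᴴ * V) * (Matrix.diagonal μ * (star V * W)) := by simp only [Matrix.mul_assoc]
        _ = Mᴴ * (Matrix.diagonal μ * M) := by rw [hMh, hM]
    rw [hexp]
    simp only [Matrix.trace, Matrix.diag, Matrix.mul_apply, Matrix.conjTranspose_apply,
      star_trivial]
    rw [Finset.sum_comm]
    apply Finset.sum_congr rfl
    intro t _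
    rw [hc, Finset.mul_sum]
    apply Finset.sum_congr rfl
    intro i _
    have hd : ∑ x, Matrix.diagonal μ t x * M x i = μ t * M t i := by
      simp [Matrix.diagonal_apply, ite_mul, Finset.sum_ite_eq]
    rw [hd]; ring
  have step3 : ∑ t, μ t * c t = ∑ s, sv s ^ 2 * c (e.symm s) := by
    rw [← Equiv.sum_comp e (fun s => sv s ^ 2 * c (e.symm s))]
    apply Finset.sum_congr rfl
    intro t _
    rw [he t, Equiv.symm_apply_apply]
  have step4 : (∑ t ∈ Finset.univ.filter (fun t : Fin q => m ≤ (t : ℕ)), sv t ^ 2)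
      ≤ ∑ s, sv s ^ 2 * c (e.symm s) := by
    apply abel_bound hmq (fun s => sv s ^ 2) (fun s => sq_nonneg _)
      (fun s t hst => by
        have := hmono s t hst
        exact pow_le_pow_left₀ (hsvnn t) this 2)
      (fun s => c (e.symm s)) (fun s => hc0 _) (fun s => hc1 _)
    rw [Equiv.sum_comp e.symm c, hcsum]
    have : q ≤ m + k := by omega
    have := (Nat.cast_le (α := ℝ)).mpr this
    push_cast at this ⊢
    linarith
  linarith [step1, step2.symm, step3, step4]

end EckartYoungAux

set_option maxHeartbeats 1000000 in
/-- **Eckart–Young low-rank approximation theorem (Frobenius norm).** Let `P` be a real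
`p × q` matrix of rank `r` with singular values `λ₁ ≥ λ₂ ≥ … ≥ λ_r > 0` (here encoded as
a descending vector `sv : Fin q → ℝ`, positive on the first `r` entries, zero afterwards,
whose squares are exactly the eigenvalues of `Pᴴ * P = PᵀP` up to a permutation), and let
`m < r`. Then the minimum of `‖P − Q‖_F²` over all `p × q` matrices `Q` with
`rank(Q) ≤ m` equals `Σ_{t=m+1}^{r} λ_t²`; in particular every `Q` with `rank(Q) ≤ m`
satisfies `‖P − Q‖_F² ≥ Σ_{t=m+1}^{r} λ_t²`. (Indices of `sv` are 0-based, so `sv t` for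
`m ≤ t` ranges over the 1-based singular values `λ_{m+1}, …, λ_q`, the entries beyond
`r` being zero.) -/
theorem eckart_young
    (p q r m : ℕ) (P : Matrix (Fin p) (Fin q) ℝ)
    (hrank : P.rank = r) (hm : m < r)
    (sv : Fin q → ℝ)
    (hmono : ∀ s t : Fin q, s ≤ t → sv t ≤ sv s)
    (hpos : ∀ t : Fin q, (t : ℕ) < r → 0 < sv t)
    (hzero : ∀ t : Fin q, r ≤ (t : ℕ) → sv t = 0)
    (heig : ∃ e : Fin q ≃ Fin q, ∀ t,
      (Matrix.isHermitian_conjTranspose_mul_self P).eigenvalues t = (sv (e t)) ^ 2) :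
    IsLeast {x : ℝ | ∃ Q : Matrix (Fin p) (Fin q) ℝ, Q.rank ≤ m ∧ x = frobSq (P - Q)}
        (∑ t ∈ Finset.univ.filter (fun t : Fin q => m ≤ (t : ℕ)), sv t ^ 2) ∧
      ∀ Q : Matrix (Fin p) (Fin q) ℝ, Q.rank ≤ m →
        (∑ t ∈ Finset.univ.filter (fun t : Fin q => m ≤ (t : ℕ)), sv t ^ 2)
          ≤ frobSq (P - Q) := by
  obtain ⟨e, he⟩ := heig
  have LB : ∀ Q : Matrix (Fin p) (Fin q) ℝ, Q.rank ≤ m →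
      (∑ t ∈ Finset.univ.filter (fun t : Fin q => m ≤ (t : ℕ)), sv t ^ 2)
        ≤ frobSq (P - Q) :=
    fun Q hQ => eckart_young_lower p q r m P hrank hm sv hmono hpos hzero e he Q hQ
  obtain ⟨Q₀, hQ₀rank, hQ₀val⟩ := eckart_young_exists p q m P sv e he
  exact ⟨⟨⟨Q₀, hQ₀rank, hQ₀val.symm⟩, fun x ⟨Q, hQ, hx⟩ => hx ▸ LB Q hQ⟩, LB⟩
end

section
/- Utility of the exponential mechanism with a union bound: let C be a nonempty finite set, q : C → ℝ a score function, t > 0, and let K be a random element of C drawn with probability Pr[K = r] = exp(t·q_r) / Σ_{s∈C} exp(t·q_s). Then for every δ ∈ (0,1), with probability at least 1 − δ over the draw of K, the inequality q_i ≤ q_K + (1/t)·log(|C|/δ) holds simultaneously for all i ∈ C. In particular, for the exponential mechanism run with zCDP budget ρ_s and score sensitivity Δ_q (so that t = √(2·ρ_s)/Δ_q), with probability at least 1 − δ, q_i ≤ q_K + (Δ_q/√(2·ρ_s))·log(|C|/δ) for all i ∈ C. -/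
open MeasureTheory ProbabilityTheory
open scoped BigOperators ENNReal

set_option maxHeartbeats 1000000 in
/-- **Utility of the exponential mechanism with a union bound.** Let `C` be a nonempty
finite set, `q : C → ℝ` a score function, `t > 0`, and let `K` be a random element of
`C` with `Pr[K = r] = exp(t·q_r)/Σ_s exp(t·q_s)`. Then for every `δ ∈ (0,1)`, with
probability at least `1 − δ`, simultaneously for all `i ∈ C`,
`q_i ≤ q_K + (1/t)·log(|C|/δ)`. In particular, for the exponential mechanism run with
zCDP budget `ρ_s` and score sensitivity `Δ_q` (so `t = √(2ρ_s)/Δ_q`), with probability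
at least `1 − δ`, `q_i ≤ q_K + (Δ_q/√(2ρ_s))·log(|C|/δ)` for all `i ∈ C`. -/
theorem exponentialMechanism_utility
    {Ω C : Type*} [MeasurableSpace Ω] [Fintype C] [Nonempty C]
    (Pr : Measure Ω) [IsProbabilityMeasure Pr]
    (q : C → ℝ) (t : ℝ) (ht : 0 < t)
    (K : Ω → C)
    (hK : ∀ r : C, Pr {ω | K ω = r} =
      ENNReal.ofReal (Real.exp (t * q r) / ∑ s, Real.exp (t * q s))) :
    (∀ δ : ℝ, 0 < δ → δ < 1 →
      ENNReal.ofReal (1 - δ) ≤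
        Pr {ω | ∀ i : C, q i ≤ q (K ω) + (1 / t) * Real.log (Fintype.card C / δ)}) ∧
    (∀ ρs Δq : ℝ, 0 < ρs → 0 < Δq → t = Real.sqrt (2 * ρs) / Δq →
      ∀ δ : ℝ, 0 < δ → δ < 1 →
        ENNReal.ofReal (1 - δ) ≤
          Pr {ω | ∀ i : C,
            q i ≤ q (K ω) + (Δq / Real.sqrt (2 * ρs)) * Real.log (Fintype.card C / δ)}) := by
  have main : ∀ δ : ℝ, 0 < δ → δ < 1 →
      ENNReal.ofReal (1 - δ) ≤
        Pr {ω | ∀ i : C, q i ≤ q (K ω) + (1 / t) * Real.log (Fintype.card C / δ)} := by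
    intro δ hδ0 hδ1
    classical
    set n : ℝ := (Fintype.card C : ℝ) with hn_def
    have hn : 0 < n := by
      simp only [hn_def, Nat.cast_pos]
      exact Fintype.card_pos
    set Z : ℝ := ∑ s, Real.exp (t * q s) with hZ_def
    have hZ : 0 < Z :=
      Finset.sum_pos (fun s _ => Real.exp_pos _) Finset.univ_nonempty
    set c : ℝ := (1 / t) * Real.log (n / δ) with hc_def
    set G : Set Ω := {ω | ∀ i : C, q i ≤ q (K ω) + c} with hG_def
    set B : Finset C := Finset.univ.filter (fun r => ∃ i, q r + c < q i) with hB_def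
    have key : ∀ r ∈ B, Pr {ω | K ω = r} ≤ ENNReal.ofReal (δ / n) := by
      intro r hr
      obtain ⟨i, hi⟩ : ∃ i, q r + c < q i := by
        simpa [hB_def] using hr
      rw [hK]
      apply ENNReal.ofReal_le_ofReal
      have h1 : Real.exp (t * q r) ≤ Real.exp (t * q i) * Real.exp (-(t * c)) := by
        rw [← Real.exp_add]
        apply Real.exp_le_exp.mpr
        nlinarith
      have h2 : Real.exp (t * q i) ≤ Z :=
        Finset.single_le_sum (f := fun s => Real.exp (t * q s))
          (fun s _ => (Real.exp_pos _).le) (Finset.mem_univ i)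
      have h3 : Real.exp (-(t * c)) = δ / n := by
        have htc : t * c = Real.log (n / δ) := by
          rw [hc_def]; field_simp
        rw [htc, Real.exp_neg, Real.exp_log (by positivity), inv_div]
      rw [div_le_iff₀ hZ]
      calc Real.exp (t * q r)
          ≤ Real.exp (t * q i) * Real.exp (-(t * c)) := h1
        _ = Real.exp (t * q i) * (δ / n) := by rw [h3]
        _ ≤ Z * (δ / n) := mul_le_mul_of_nonneg_right h2 (by positivity)
        _ = δ / n * Z := mul_comm _ _
    have hsub : Gᶜ ⊆ ⋃ r ∈ B, {ω | K ω = r} := by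
      intro ω hω
      simp only [hG_def, Set.mem_compl_iff, Set.mem_setOf_eq, not_forall, not_le] at hω
      obtain ⟨i, hi⟩ := hω
      refine Set.mem_iUnion₂.mpr ⟨K ω, ?_, rfl⟩
      simp only [hB_def, Finset.mem_filter, Finset.mem_univ, true_and]
      exact ⟨i, hi⟩
    have hbad : Pr Gᶜ ≤ ENNReal.ofReal δ := by
      calc Pr Gᶜ ≤ Pr (⋃ r ∈ B, {ω | K ω = r}) := measure_mono hsub
        _ ≤ ∑ r ∈ B, Pr {ω | K ω = r} := measure_biUnion_finset_le _ _
        _ ≤ ∑ r ∈ B, ENNReal.ofReal (δ / n) := Finset.sum_le_sum key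
        _ = (B.card : ℝ≥0∞) * ENNReal.ofReal (δ / n) := by
            rw [Finset.sum_const, nsmul_eq_mul]
        _ ≤ (Fintype.card C : ℝ≥0∞) * ENNReal.ofReal (δ / n) := by
            gcongr
            exact_mod_cast Finset.card_le_univ B
        _ = ENNReal.ofReal (n * (δ / n)) := by
            rw [ENNReal.ofReal_mul hn.le]
            congr 1
            rw [hn_def]
            simp [ENNReal.ofReal_natCast]
        _ = ENNReal.ofReal δ := by
            congr 1
            field_simp
    have h1 : (1 : ℝ≥0∞) ≤ Pr G + ENNReal.ofReal δ := by
      calc (1 : ℝ≥0∞) = Pr Set.univ := (measure_univ).symm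
        _ = Pr (G ∪ Gᶜ) := by rw [Set.union_compl_self]
        _ ≤ Pr G + Pr Gᶜ := measure_union_le _ _
        _ ≤ Pr G + ENNReal.ofReal δ := add_le_add_right hbad _
    have : ENNReal.ofReal (1 - δ) ≤ Pr G := by
      rw [ENNReal.ofReal_sub _ hδ0.le, ENNReal.ofReal_one]
      exact tsub_le_iff_right.mpr h1
    exact this
  refine ⟨main, ?_⟩
  intro ρs Δq hρ hΔ hts δ h0 h1
  have hs : 0 < Real.sqrt (2 * ρs) := Real.sqrt_pos.mpr (by linarith)
  have heq : Δq / Real.sqrt (2 * ρs) = 1 / t := by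
    rw [hts, one_div_div]
  rw [heq]
  exact main δ h0 h1
end

section
/- High-probability upper bound on the total error of unselected marginals (Theorem on unselected marginal errors): let C be a nonempty finite candidate set of marginals, ρ > 0, ρ_s^K > 0, Δ_q > 0, δ ∈ (0,1). For each i ∈ C let M_i ∈ ℝ^{n_i} be the true marginal, M̂_i^{K−1} its estimate by the model before the final selection round, and M̂_i its estimate by the final model; let r_i > 0 and define the score q_i = r_i·(‖M_i − M̂_i^{K−1}‖₁ − n_i/√(π·ρ_s^K)). Let θ be a random element of C drawn with probability proportional to exp(√(2·ρ_s^K)·q_θ/Δ_q) (the exponential mechanism), and let I_u ⊆ C be the set of unselected indices. For each i ∈ I_u define B_{i,K} = (r_θ/r_i)·‖M_θ − M̂_θ^{K−1}‖₁ + (n_i·r_i − n_θ·r_θ)/(r_i·√(π·ρ_s^K)) + (Δ_q/(r_i·√(2·ρ_s^K)))·log(|C|/δ). Then with probability at least 1 − |I_u|·δ over the draw of θ, Σ_{i∈I_u} ‖M_i − M̂_i‖₁ ≤ Σ_{i∈I_u} ( B_{i,K} + ‖M̂_i^{K−1} − M̂_i‖₁ ). -/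
open MeasureTheory ProbabilityTheory
open scoped BigOperators

/-- **High-probability upper bound on the total error of unselected marginals.**
Let `C` be a nonempty finite candidate set of marginals. For each `i ∈ C` let
`M i ∈ ℝ^{n i}` be the true marginal, `Mprev i` its estimate by the model before the
final selection round and `Mhat i` its (random) estimate by the final model; let
`r i > 0` and define the score `q i = r_i·(‖M_i − Mprev_i‖₁ − n_i/√(π·ρ_s^K))`. Let `θ`
(here `K ω`) be drawn by the exponential mechanism with probability proportional to
`exp(√(2·ρ_s^K)·q_θ/Δ_q)`, and let the unselected set `I_u` be `C \ {θ}`. With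
`B_{i,K} = (r_θ/r_i)·‖M_θ − Mprev_θ‖₁ + (n_i·r_i − n_θ·r_θ)/(r_i·√(π·ρ_s^K))
+ (Δ_q/(r_i·√(2·ρ_s^K)))·log(|C|/δ)`, with probability at least `1 − |I_u|·δ`
(`|I_u| = |C| − 1`),
`Σ_{i∈I_u} ‖M_i − Mhat_i‖₁ ≤ Σ_{i∈I_u} (B_{i,K} + ‖Mprev_i − Mhat_i‖₁)`. -/
theorem unselected_marginal_total_error_bound
    {Ω C : Type*} [MeasurableSpace Ω] [Fintype C] [DecidableEq C] [Nonempty C]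
    (Pr : Measure Ω) [IsProbabilityMeasure Pr]
    (ρsK Δq δ : ℝ) (hρ : 0 < ρsK) (hΔq : 0 < Δq) (hδ0 : 0 < δ) (hδ1 : δ < 1)
    (n : C → ℕ)
    (M Mprev : (i : C) → Fin (n i) → ℝ)
    (Mhat : (i : C) → Ω → Fin (n i) → ℝ)
    (r : C → ℝ) (hr : ∀ i, 0 < r i)
    (q : C → ℝ)
    (hq : ∀ i, q i = r i *
      ((∑ t, |M i t - Mprev i t|) - (n i : ℝ) / Real.sqrt (Real.pi * ρsK)))
    (K : Ω → C)
    (hK : ∀ θ : C, Pr {ω | K ω = θ} =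
      ENNReal.ofReal (Real.exp (Real.sqrt (2 * ρsK) * q θ / Δq) /
        ∑ s, Real.exp (Real.sqrt (2 * ρsK) * q s / Δq)))
    (B : C → C → ℝ)
    (hB : ∀ i θ, B i θ =
      (r θ / r i) * (∑ t, |M θ t - Mprev θ t|)
        + ((n i : ℝ) * r i - (n θ : ℝ) * r θ) / (r i * Real.sqrt (Real.pi * ρsK))
        + (Δq / (r i * Real.sqrt (2 * ρsK))) * Real.log ((Fintype.card C : ℝ) / δ)) :
    ENNReal.ofReal (1 - ((Fintype.card C : ℝ) - 1) * δ) ≤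
      Pr {ω | ∑ i ∈ Finset.univ.erase (K ω), (∑ t, |M i t - Mhat i ω t|) ≤
        ∑ i ∈ Finset.univ.erase (K ω),
          (B i (K ω) + ∑ t, |Mprev i t - Mhat i ω t|)} := by
  classical
  set sπ := Real.sqrt (Real.pi * ρsK) with hsπ
  set s2 := Real.sqrt (2 * ρsK) with hs2
  have hsπpos : 0 < sπ := Real.sqrt_pos.mpr (mul_pos Real.pi_pos hρ)
  have hs2pos : 0 < s2 := Real.sqrt_pos.mpr (by linarith)
  set cC := (Fintype.card C : ℝ) with hcC
  have hcard1 : 1 ≤ Fintype.card C := Fintype.card_pos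
  have hcC1 : (1:ℝ) ≤ cC := by rw [hcC]; exact_mod_cast hcard1
  by_cases hone : Fintype.card C = 1
  · -- trivial case: the unselected set is empty
    have hempty : ∀ x : C, Finset.univ.erase x = (∅ : Finset C) := by
      intro x
      ext y
      simp only [Finset.mem_erase, Finset.mem_univ, and_true, Finset.notMem_empty, iff_false,
        not_not]
      exact Fintype.card_le_one_iff.mp hone.le y x
    have : {ω | ∑ i ∈ Finset.univ.erase (K ω), (∑ t, |M i t - Mhat i ω t|) ≤
        ∑ i ∈ Finset.univ.erase (K ω),
          (B i (K ω) + ∑ t, |Mprev i t - Mhat i ω t|)} = Set.univ := by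
      ext ω; simp [hempty]
    rw [this, measure_univ]
    refine ENNReal.ofReal_le_one.mpr ?_
    nlinarith
  have hcard2 : 2 ≤ Fintype.card C := by omega
  have hcC2 : (2 : ℝ) ≤ cC := by rw [hcC]; exact_mod_cast hcard2
  have hCδ : 1 < cC / δ := by
    rw [lt_div_iff₀ hδ0]; linarith
  set L := Real.log (cC / δ) with hL
  have hLpos : 0 < L := Real.log_pos hCδ
  set t := (Δq / s2) * L with ht
  -- pointwise key bound
  have key : ∀ θ i : C, q i ≤ q θ + t → ∀ f : Fin (n i) → ℝ,
      (∑ x, |M i x - f x|) ≤ B i θ + ∑ x, |Mprev i x - f x| := by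
    intro θ i hqi f
    have hri := hr i
    have hrθ := hr θ
    have tri : (∑ x, |M i x - f x|) ≤
        (∑ x, |M i x - Mprev i x|) + ∑ x, |Mprev i x - f x| := by
      rw [← Finset.sum_add_distrib]
      refine Finset.sum_le_sum fun x _ => ?_
      calc |M i x - f x| = |(M i x - Mprev i x) + (Mprev i x - f x)| := by ring_nf
        _ ≤ |M i x - Mprev i x| + |Mprev i x - f x| := abs_add_le _ _
    have hstep : (∑ x, |M i x - Mprev i x|) ≤ B i θ := by
      have e1 := hq i
      have e2 := hq θ
      rw [hB i θ]
      rw [← mul_le_mul_iff_right₀ hri]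
      have h1 : r i * (∑ x, |M i x - Mprev i x|) = q i + r i * ((n i : ℝ) / sπ) := by
        rw [e1]; ring
      have h2 : r θ * (∑ x, |M θ x - Mprev θ x|) = q θ + r θ * ((n θ : ℝ) / sπ) := by
        rw [e2]; ring
      have expand : r i * ((r θ / r i) * (∑ x, |M θ x - Mprev θ x|)
          + ((n i : ℝ) * r i - (n θ : ℝ) * r θ) / (r i * sπ)
          + (Δq / (r i * s2)) * L)
          = r θ * (∑ x, |M θ x - Mprev θ x|)
            + ((n i : ℝ) * r i - (n θ : ℝ) * r θ) / sπ + (Δq / s2) * L := by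
        field_simp
      rw [expand, h1]
      have : ((n i : ℝ) * r i - (n θ : ℝ) * r θ) / sπ
          = r i * ((n i : ℝ) / sπ) - r θ * ((n θ : ℝ) / sπ) := by
        field_simp
      rw [this, h2]
      have := hqi
      rw [ht] at this
      linarith
    linarith
  -- exponential mechanism tail bound
  set w : C → ℝ := fun θ => Real.exp (s2 * q θ / Δq) with hw
  set Z := ∑ s, w s with hZ
  obtain ⟨θm, _, hθm⟩ := Finset.exists_max_image Finset.univ q ⟨Classical.arbitrary C, Finset.mem_univ _⟩
  have hZge : w θm ≤ Z := by
    refine Finset.single_le_sum (f := w) (fun s _ => (Real.exp_pos _).le) (Finset.mem_univ θm)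
  have hZpos : 0 < Z := lt_of_lt_of_le (Real.exp_pos _) hZge
  have hbadbound : ∀ θ : C, ¬ (∀ i, q i ≤ q θ + t) → w θ / Z ≤ δ / cC := by
    intro θ hbad
    push_neg at hbad
    obtain ⟨i, hi⟩ := hbad
    have hqθ : q θ < q θm - t := by
      have := hθm i (Finset.mem_univ i)
      linarith
    have hwθ : w θ ≤ w θm * (δ / cC) := by
      have h1 : w θ ≤ Real.exp (s2 * (q θm - t) / Δq) := by
        apply Real.exp_le_exp.mpr
        apply div_le_div_of_nonneg_right _ hΔq.le
        exact mul_le_mul_of_nonneg_left (by linarith) hs2pos.le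
      have h2 : Real.exp (s2 * (q θm - t) / Δq) = w θm * Real.exp (-L) := by
        rw [hw]
        rw [← Real.exp_add]
        congr 1
        rw [ht]
        field_simp
        ring
      have h3 : Real.exp (-L) = δ / cC := by
        rw [hL, ← Real.log_inv, Real.exp_log (by positivity)]
        rw [inv_div]
      rw [h2, h3] at h1
      exact h1
    calc w θ / Z ≤ w θm * (δ / cC) / Z := by
          apply div_le_div_of_nonneg_right hwθ hZpos.le
      _ = (w θm / Z) * (δ / cC) := by ring
      _ ≤ 1 * (δ / cC) := by
          apply mul_le_mul_of_nonneg_right _ (by positivity)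
          rw [div_le_one hZpos]; exact hZge
      _ = δ / cC := one_mul _
  -- the bad finset
  set bad : Finset C := Finset.univ.filter (fun θ => ¬ (∀ i, q i ≤ q θ + t)) with hbaddef
  set E := {ω | ∑ i ∈ Finset.univ.erase (K ω), (∑ t, |M i t - Mhat i ω t|) ≤
        ∑ i ∈ Finset.univ.erase (K ω),
          (B i (K ω) + ∑ t, |Mprev i t - Mhat i ω t|)} with hE
  have hEc : Eᶜ ⊆ ⋃ θ ∈ bad, {ω | K ω = θ} := by
    intro ω hω
    simp only [Set.mem_iUnion, Set.mem_setOf_eq, exists_prop]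
    refine ⟨K ω, ?_, rfl⟩
    rw [hbaddef, Finset.mem_filter]
    refine ⟨Finset.mem_univ _, ?_⟩
    intro hgood
    apply hω
    simp only [hE, Set.mem_setOf_eq]
    refine Finset.sum_le_sum fun i _ => ?_
    exact key (K ω) i (hgood i) (Mhat i ω)
  have hPrEc : Pr Eᶜ ≤ ENNReal.ofReal δ := by
    calc Pr Eᶜ ≤ ∑ θ ∈ bad, Pr {ω | K ω = θ} :=
          (measure_mono hEc).trans (measure_biUnion_finset_le bad _)
      _ ≤ ∑ θ ∈ bad, ENNReal.ofReal (δ / cC) := by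
          refine Finset.sum_le_sum fun θ hθ => ?_
          rw [hK θ]
          apply ENNReal.ofReal_le_ofReal
          rw [hbaddef, Finset.mem_filter] at hθ
          exact hbadbound θ hθ.2
      _ = bad.card • ENNReal.ofReal (δ / cC) := by rw [Finset.sum_const]
      _ ≤ (Fintype.card C) • ENNReal.ofReal (δ / cC) := by
          exact nsmul_le_nsmul_left zero_le (Finset.card_le_univ bad)
      _ = ENNReal.ofReal (cC * (δ / cC)) := by
          rw [nsmul_eq_mul, ← ENNReal.ofReal_natCast, ← ENNReal.ofReal_mul (by positivity)]
      _ = ENNReal.ofReal δ := by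
          congr 1
          field_simp
  have hunion : (1 : ENNReal) ≤ Pr E + Pr Eᶜ := by
    calc (1 : ENNReal) = Pr Set.univ := (measure_univ).symm
      _ ≤ Pr (E ∪ Eᶜ) := measure_mono (by rw [Set.union_compl_self])
      _ ≤ Pr E + Pr Eᶜ := measure_union_le _ _
  calc ENNReal.ofReal (1 - (cC - 1) * δ) ≤ ENNReal.ofReal (1 - δ) := by
        apply ENNReal.ofReal_le_ofReal
        nlinarith
    _ = 1 - ENNReal.ofReal δ := by
        rw [ENNReal.ofReal_sub _ hδ0.le, ENNReal.ofReal_one]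
    _ ≤ 1 - Pr Eᶜ := tsub_le_tsub_left hPrEc _
    _ ≤ Pr E := by
        rw [tsub_le_iff_right]
        exact hunion
end
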